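/- arXiv:1605.04735 — 14 statements merged into one kernel-verified Lean document; each statement's English description precedes it below -/
import Mathlib

section
/- Let I be a tall ideal on ω. If add*(I) = cov*(I) = κ, then there is a cotower in I of height κ; that is, there is a ⊆*-increasing sequence (A_α)_{α<κ} in I such that every infinite X ⊆ ω has infinite intersection with some A_α. -/
open Set Cardinal

/-- `I` is a (proper) ideal on ω containing all finite sets. -/
def IsIdealOmega (I : Set (Set ℕ)) : Prop :=
  (∀ A ∈ I, ∀ B ⊆ A, B ∈ I) ∧ (∀ A ∈ I, ∀ B ∈ I, A ∪ B ∈ I) ∧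
    (∀ A : Set ℕ, A.Finite → A ∈ I) ∧ Set.univ ∉ I

/-- `I` is tall: every infinite set contains an infinite member of `I`. -/
def IsTall (I : Set (Set ℕ)) : Prop :=
  ∀ X : Set ℕ, X.Infinite → ∃ A ∈ I, A ⊆ X ∧ A.Infinite

/-- add*(I): least size of a ⊆*-unbounded family in `I`. -/
noncomputable def addStar (I : Set (Set ℕ)) : Cardinal :=
  sInf {c | ∃ A : Set (Set ℕ), A ⊆ I ∧ Cardinal.mk A = c ∧
    ¬ ∃ B ∈ I, ∀ a ∈ A, (a \ B).Finite}

/-- cov*(I): least size of a family in `I` meeting every infinite set infinitely. -/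
noncomputable def covStar (I : Set (Set ℕ)) : Cardinal :=
  sInf {c | ∃ D : Set (Set ℕ), D ⊆ I ∧ Cardinal.mk D = c ∧
    ∀ X : Set ℕ, X.Infinite → ∃ A ∈ D, (X ∩ A).Infinite}

/-! Write κ = add*(I) = cov*(I); tallness makes κ infinite. Enumerate a covering family of size
κ as (d α)_{α<κ} and choose recursively A α ∈ I almost containing d α and every earlier A β:
this is fewer than add*(I) sets, so a bound exists. An infinite X meets some d α infinitely, hence
also A α ⊇* d α. -/

lemma IsIdealOmega.sUnion_mem {I : Set (Set ℕ)} (hI : IsIdealOmega I) {F : Set (Set ℕ)}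
    (hF : F.Finite) (hFI : F ⊆ I) : ⋃₀ F ∈ I := by
  induction F, hF using Set.Finite.induction_on with
  | empty => simpa using hI.2.2.1 ∅ finite_empty
  | @insert a s _ _ ih =>
    rw [sUnion_insert]
    exact hI.2.1 a (hFI (mem_insert a s)) _ (ih fun x hx => hFI (mem_insert_of_mem a hx))

lemma IsIdealOmega.not_exists_almost_bound {I : Set (Set ℕ)} (hI : IsIdealOmega I)
    (htall : IsTall I) : ¬ ∃ B ∈ I, ∀ a ∈ I, (a \ B).Finite := by
  rintro ⟨B, hB, hbound⟩
  by_cases hc : Bᶜ.Finite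
  · exact hI.2.2.2 (by simpa using hI.2.1 B hB Bᶜ (hI.2.2.1 _ hc))
  · obtain ⟨A, hA, hAB, hAinf⟩ := htall Bᶜ hc
    exact hAinf ((hbound A hA).subset fun x hx => ⟨hx, hAB hx⟩)

lemma IsIdealOmega.aleph0_le_addStar {I : Set (Set ℕ)} (hI : IsIdealOmega I)
    (htall : IsTall I) : ℵ₀ ≤ addStar I := by
  refine le_csInf ⟨#I, I, subset_rfl, rfl, hI.not_exists_almost_bound htall⟩ ?_
  rintro _ ⟨A, hAI, rfl, hunbounded⟩
  by_contra! hA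
  refine hunbounded ⟨⋃₀ A, hI.sUnion_mem (lt_aleph0_iff_set_finite.mp hA) hAI, fun a ha => ?_⟩
  simp [sdiff_eq_empty.mpr (subset_sUnion_of_mem ha)]

lemma exists_almost_bound_of_mk_lt_addStar {I F : Set (Set ℕ)} (hF : F ⊆ I)
    (hlt : #F < addStar I) : ∃ B ∈ I, ∀ a ∈ F, (a \ B).Finite := by
  by_contra h
  exact (csInf_le' ⟨F, hF, rfl, h⟩ : addStar I ≤ #F).not_gt hlt

lemma IsTall.exists_cover_mk_eq_covStar {I : Set (Set ℕ)} (htall : IsTall I) :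
    ∃ D ⊆ I, #D = covStar I ∧ ∀ X : Set ℕ, X.Infinite → ∃ A ∈ D, (X ∩ A).Infinite := by
  have hne : {c | ∃ D ⊆ I, #D = c ∧
      ∀ X : Set ℕ, X.Infinite → ∃ A ∈ D, (X ∩ A).Infinite}.Nonempty := by
    refine ⟨#I, I, subset_rfl, rfl, fun X hX => ?_⟩
    obtain ⟨A, hA, hAX, hAinf⟩ := htall X hX
    exact ⟨A, hA, by rwa [inter_eq_self_of_subset_right hAX]⟩
  exact csInf_mem hne

lemma exists_enum_of_mk_eq {β : Type*} [Nonempty β] {D : Set β} {κ : Cardinal} (hD : #D = κ) :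
    ∃ d : Ordinal → β, (∀ α < κ.ord, d α ∈ D) ∧ ∀ x ∈ D, ∃ α < κ.ord, d α = x := by
  obtain ⟨e⟩ : Nonempty (D ≃ κ.ord.ToType) := Cardinal.eq.mp (by rw [mk_ord_toType, hD])
  let d : Ordinal → β := fun α =>
    if h : α < κ.ord then e.symm (Ordinal.ToType.mk ⟨α, h⟩) else Classical.arbitrary β
  refine ⟨d, fun α hα => by simp only [d, dif_pos hα, Subtype.coe_prop], fun x hx => ?_⟩
  set α := Ordinal.ToType.mk.symm (e ⟨x, hx⟩)
  refine ⟨α, α.2, ?_⟩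
  simp [d, dif_pos (show (α : Ordinal) < κ.ord from α.2), α]

lemma Set.Infinite.inter_of_diff_finite {γ : Type*} {X A B : Set γ} (hXA : (X ∩ A).Infinite)
    (hAB : (A \ B).Finite) : (X ∩ B).Infinite := by
  refine fun hXB => hXA ((hXB.union hAB).subset fun x ⟨hxX, hxA⟩ => ?_)
  by_cases hxB : x ∈ B
  · exact Or.inl ⟨hxX, hxB⟩
  · exact Or.inr ⟨hxA, hxB⟩

-- An arbitrary set when `F` has no `⊆*`-bound in `I`.
noncomputable def almostBound (I F : Set (Set ℕ)) : Set ℕ :=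
  Classical.epsilon fun B => B ∈ I ∧ ∀ a ∈ F, (a \ B).Finite

lemma almostBound_spec {I F : Set (Set ℕ)} (hF : F ⊆ I) (hlt : #F < addStar I) :
    almostBound I F ∈ I ∧ ∀ a ∈ F, (a \ almostBound I F).Finite := by
  obtain ⟨B, hB⟩ := exists_almost_bound_of_mk_lt_addStar hF hlt
  exact Classical.epsilon_spec (p := fun B => B ∈ I ∧ ∀ a ∈ F, (a \ B).Finite) ⟨B, hB⟩

noncomputable def tower (I : Set (Set ℕ)) (d : Ordinal → Set ℕ) (α : Ordinal) : Set ℕ :=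
  almostBound I (insert (d α) (range fun β : Iio α => tower I d β))
termination_by α
decreasing_by exact β.2

universe u in
lemma mk_range_Iio_le_card {β : Type u} {α : Ordinal.{u}} (f : Iio α → β) :
    #(range f) ≤ α.card := by
  rw [← lift_le.{u + 1}]
  simpa using mk_range_le_lift (f := f)

lemma tower_eq (I : Set (Set ℕ)) (d : Ordinal → Set ℕ) (α : Ordinal) :
    tower I d α = almostBound I (insert (d α) (range fun β : Iio α => tower I d β)) := by
  rw [tower]

lemma tower_spec {I : Set (Set ℕ)} {d : Ordinal → Set ℕ} (hadd : ℵ₀ ≤ addStar I)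
    (hd : ∀ α < (addStar I).ord, d α ∈ I) (α : Ordinal) (hα : α < (addStar I).ord) :
    tower I d α ∈ I ∧ (d α \ tower I d α).Finite ∧
      ∀ β < α, (tower I d β \ tower I d α).Finite := by
  induction α using WellFoundedLT.induction with
  | _ α ih =>
  have hprev : range (fun β : Iio α => tower I d β) ⊆ I := by
    rintro _ ⟨β, rfl⟩
    exact (ih β β.2 (β.2.trans hα)).1
  have hsmall :
      #(insert (d α) (range fun β : Iio α => tower I d β) : Set (Set ℕ)) < addStar I :=
    calc _ ≤ #(range fun β : Iio α => tower I d β) + 1 := mk_insert_le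
      _ < addStar I := add_lt_of_lt hadd
          ((mk_range_Iio_le_card _).trans_lt (lt_ord.mp hα)) (one_lt_aleph0.trans_le hadd)
  obtain ⟨hmem, hbound⟩ := almostBound_spec (insert_subset (hd α hα) hprev) hsmall
  rw [tower_eq I d α]
  exact ⟨hmem, hbound _ (mem_insert _ _),
    fun β hβ => hbound _ (mem_insert_of_mem _ ⟨⟨β, hβ⟩, rfl⟩)⟩

theorem stmt1 (I : Set (Set ℕ)) (hI : IsIdealOmega I) (htall : IsTall I)
    (κ : Cardinal) (hadd : addStar I = κ) (hcov : covStar I = κ) :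
    ∃ A : Ordinal → Set ℕ,
      (∀ α < κ.ord, A α ∈ I) ∧
      (∀ β α, β ≤ α → α < κ.ord → (A β \ A α).Finite) ∧
      (∀ X : Set ℕ, X.Infinite → ∃ α < κ.ord, (X ∩ A α).Infinite) := by
  subst hadd
  have hinf := hI.aleph0_le_addStar htall
  obtain ⟨D, hDI, hDcard, hDcover⟩ := htall.exists_cover_mk_eq_covStar
  obtain ⟨d, hdD, hd_onto⟩ := exists_enum_of_mk_eq (hDcard.trans hcov)
  have hspec := tower_spec hinf fun α hα => hDI (hdD α hα)
  refine ⟨tower I d, fun α hα => (hspec α hα).1, fun β α hβα hα => ?_, fun X hX => ?_⟩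
  · rcases hβα.eq_or_lt with rfl | hβα
    · simp
    · exact (hspec α hα).2.2 β hβα
  · obtain ⟨_, hxD, hXx⟩ := hDcover X hX
    obtain ⟨α, hα, rfl⟩ := hd_onto _ hxD
    exact ⟨α, hα, hXx.inter_of_diff_finite (hspec α hα).2.1⟩
end

section
/- Let I be a tall ideal on ω. If I contains a cotower of length λ, then cov*(I) ≤ cf(λ) ≤ non*(I). -/
open Set Cardinal

/-- non*(I): least size of a family of infinite sets such that every member of `I`
meets some member of the family only finitely. -/
noncomputable def nonStar (I : Set (Set ℕ)) : Cardinal :=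
  sInf {c | ∃ 𝒳 : Set (Set ℕ), (∀ X ∈ 𝒳, X.Infinite) ∧ Cardinal.mk 𝒳 = c ∧
    ∀ A ∈ I, ∃ X ∈ 𝒳, (A ∩ X).Finite}

/-! If an infinite `X` met every `A α` finitely, `Xᶜ` would be a coinfinite set almost containing
the whole cotower. So every infinite set meets some `A α` infinitely, and then, by almost
monotonicity, every later `A β` too. Hence the `A α` along a cofinal sequence of length `cf λ`
witness cov*. Conversely, for a non*-witness `𝒳` pick for each `X ∈ 𝒳` an `α_X < λ` with
`A α_X ∩ X` infinite; each `A β` misses some `X ∈ 𝒳` up to a finite set, which forces `β < α_X`,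
so the `α_X` are cofinal in `λ` and `cf λ ≤ |𝒳|`. -/

namespace Ordinal

theorem exists_cofinal_family_mk_eq_cof (o : Ordinal.{u}) :
    ∃ (ι : Type u) (f : ι → Ordinal.{u}),
      #ι = o.cof ∧ (∀ i, f i < o) ∧ ∀ a < o, ∃ i, a ≤ f i := by
  obtain ⟨s, hs, hcard⟩ := Order.exists_cof_eq o.ToType
  refine ⟨s, fun x ↦ (ToType.mk.symm x.1).1, by rw [hcard, cof_toType],
    fun x ↦ (ToType.mk.symm x.1).2, fun a ha ↦ ?_⟩
  obtain ⟨y, hy, hle⟩ := hs (ToType.mk ⟨a, ha⟩)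
  exact ⟨⟨y, hy⟩, ToType.mk.le_symm_apply.2 hle⟩

theorem cof_le_mk_of_forall_exists_le {ι : Type u} {f : ι → Ordinal.{u}} {o : Ordinal.{u}}
    (hf : ∀ i, f i < o) (hcof : ∀ a < o, ∃ i, a ≤ f i) : o.cof ≤ #ι := by
  by_contra! h
  obtain ⟨i, hi⟩ := hcof _ (iSup_add_one_lt_of_lt_cof h hf)
  exact (hi.trans_lt (lt_iSup_add_one f i)).false

end Ordinal

theorem Set.Finite.inter_of_finite_diff {α : Type*} {B C X : Set α} (hBC : (B \ C).Finite)
    (hC : (C ∩ X).Finite) : (B ∩ X).Finite :=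
  (hBC.union hC).subset fun x ⟨hxB, hxX⟩ ↦ by
    by_cases hxC : x ∈ C
    exacts [Or.inr ⟨hxC, hxX⟩, Or.inl ⟨hxB, hxC⟩]

theorem IsIdealOmega.compl_infinite {I : Set (Set ℕ)} (hI : IsIdealOmega I) {B : Set ℕ}
    (hB : B ∈ I) : Bᶜ.Infinite := fun hfin ↦ by
  obtain ⟨-, hunion, hfinite, huniv⟩ := hI
  exact huniv (by simpa using hunion B hB Bᶜ (hfinite _ hfin))

theorem covStar_le_mk {I D : Set (Set ℕ)} (hDI : D ⊆ I)
    (hD : ∀ X : Set ℕ, X.Infinite → ∃ A ∈ D, (X ∩ A).Infinite) : covStar I ≤ #D :=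
  csInf_le' ⟨D, hDI, rfl, hD⟩

theorem le_nonStar {I : Set (Set ℕ)} (hI : IsIdealOmega I) {c : Cardinal}
    (h : ∀ 𝒳 : Set (Set ℕ), (∀ X ∈ 𝒳, X.Infinite) →
      (∀ A ∈ I, ∃ X ∈ 𝒳, (A ∩ X).Finite) → c ≤ #𝒳) : c ≤ nonStar I := by
  refine le_csInf ?_ fun _ ⟨𝒳, hinf, hmk, hmeet⟩ ↦ hmk ▸ h 𝒳 hinf hmeet
  exact ⟨_, {X | X.Infinite}, fun X hX ↦ hX, rfl,
    fun B hB ↦ ⟨Bᶜ, hI.compl_infinite hB, by simp⟩⟩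

structure IsCotower (I : Set (Set ℕ)) (lam : Ordinal) (A : Ordinal → Set ℕ) : Prop where
  mem : ∀ α < lam, A α ∈ I
  almost_mono : ∀ β α, β ≤ α → α < lam → (A β \ A α).Finite
  not_bounded : ¬ ∃ Y : Set ℕ, Yᶜ.Infinite ∧ ∀ α < lam, (A α \ Y).Finite

namespace IsCotower

variable {I : Set (Set ℕ)} {lam : Ordinal.{0}} {A : Ordinal → Set ℕ}

theorem exists_infinite_inter (hA : IsCotower I lam A) {X : Set ℕ} (hX : X.Infinite) :
    ∃ α < lam, (A α ∩ X).Infinite := by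
  by_contra! h
  refine hA.not_bounded ⟨Xᶜ, by rwa [compl_compl], fun α hα ↦ ?_⟩
  simpa using h α hα

theorem covStar_le_cof (hA : IsCotower I lam A) : covStar I ≤ lam.cof := by
  obtain ⟨ι, f, hcard, hflt, hcof⟩ := lam.exists_cofinal_family_mk_eq_cof
  refine (covStar_le_mk (D := range (A ∘ f)) ?_ fun X hX ↦ ?_).trans (mk_range_le.trans_eq hcard)
  · rintro _ ⟨i, rfl⟩
    exact hA.mem _ (hflt i)
  · obtain ⟨α, hα, hinf⟩ := hA.exists_infinite_inter hX
    obtain ⟨i, hi⟩ := hcof α hα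
    refine ⟨A (f i), mem_range_self i, fun hfin ↦ hinf ?_⟩
    exact (hA.almost_mono α (f i) hi (hflt i)).inter_of_finite_diff (by rwa [inter_comm])

theorem cof_le_nonStar (hI : IsIdealOmega I) (hA : IsCotower I lam A) :
    lam.cof ≤ nonStar I := by
  refine le_nonStar hI fun 𝒳 hinf hmeet ↦ ?_
  choose g hglt hg using fun X : 𝒳 ↦ hA.exists_infinite_inter (hinf X X.2)
  refine Ordinal.cof_le_mk_of_forall_exists_le hglt fun β hβ ↦ ?_
  obtain ⟨X, hX, hfin⟩ := hmeet (A β) (hA.mem β hβ)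
  refine ⟨⟨X, hX⟩, le_of_not_gt fun hlt ↦ hg ⟨X, hX⟩ ?_⟩
  exact (hA.almost_mono _ β hlt.le hβ).inter_of_finite_diff hfin

end IsCotower

theorem stmt2_general (I : Set (Set ℕ)) (hI : IsIdealOmega I)
    (lam : Ordinal) (A : Ordinal → Set ℕ)
    (hmem : ∀ α < lam, A α ∈ I)
    (hmono : ∀ β α, β ≤ α → α < lam → (A β \ A α).Finite)
    (hnopu : ¬ ∃ Y : Set ℕ, Yᶜ.Infinite ∧ ∀ α < lam, (A α \ Y).Finite) :
    covStar I ≤ lam.cof ∧ lam.cof ≤ nonStar I :=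
  have hA : IsCotower I lam A := ⟨hmem, hmono, hnopu⟩
  ⟨hA.covStar_le_cof, hA.cof_le_nonStar hI⟩

theorem stmt2 (I : Set (Set ℕ)) (hI : IsIdealOmega I) (htall : IsTall I)
    (lam : Ordinal) (A : Ordinal → Set ℕ)
    (hmem : ∀ α < lam, A α ∈ I)
    (hmono : ∀ β α, β ≤ α → α < lam → (A β \ A α).Finite)
    (hnopu : ¬ ∃ Y : Set ℕ, Yᶜ.Infinite ∧ ∀ α < lam, (A α \ Y).Finite) :
    covStar I ≤ lam.cof ∧ lam.cof ≤ nonStar I :=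
  stmt2_general I hI lam A hmem hmono hnopu
end

section
/- The ideal ED_fin contains no cotowers: for every regular uncountable cardinal κ and every ⊆*-increasing sequence (A_α)_{α<κ} in ED_fin there is a set B ⊆ Δ with Δ∖B infinite such that A_α ⊆* B for every α < κ. -/
/-!
Since `ℵ₀ < cf κ`, every countable colouring of a cofinal subset of `κ` has a cofinal colour
class. So cofinally many `A β` have columns of size at most `N` from some `m` on; take `N`
minimal. Some `A β₀` of this class then has infinitely many columns of size exactly `N`,
since otherwise a second colouring would give a cofinal class with a smaller bound. On such a
column, far enough out that `A β₀ ⊆* A β` holds columnwise, every `A β` of the class has the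
same column as `A β₀`. Choosing on each such column a point of `Δ` outside `A β₀` yields an
infinite `C ⊆ Δ` almost disjoint from every `A β` of the class, and `B = Δ \ C` works because
the class is cofinal.
-/

open Set Cardinal

/-- The triangle Δ = {(n,m) : m ≤ n}. -/
def Delta : Set (ℕ × ℕ) := {p | p.2 ≤ p.1}

/-- The ideal ED_fin on Δ: sets with uniformly bounded vertical sections eventually. -/
def EDfin : Set (Set (ℕ × ℕ)) :=
  {A | A ⊆ Delta ∧ ∃ N m : ℕ, ∀ n ≥ m, Set.ncard {k | (n, k) ∈ A} ≤ N}

def CofinalBelow (o : Ordinal) (S : Set Ordinal) : Prop :=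
  ∀ γ < o, ∃ β ∈ S, γ ≤ β ∧ β < o

namespace CofinalBelow

variable {o : Ordinal} {S T : Set Ordinal}

theorem mono (hS : CofinalBelow o S) (hST : S ⊆ T) : CofinalBelow o T := fun γ hγ =>
  let ⟨β, hβS, hγβ, hβo⟩ := hS γ hγ
  ⟨β, hST hβS, hγβ, hβo⟩

theorem exists_fiber {ι : Type*} [Countable ι] (ho : ℵ₀ < o.cof) (hS : CofinalBelow o S)
    {P : ι → Ordinal → Prop} (hP : ∀ β ∈ S, β < o → ∃ i, P i β) :
    ∃ i, CofinalBelow o {β ∈ S | P i β} := by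
  by_contra! h
  simp only [CofinalBelow, not_forall, not_exists, not_and] at h
  choose bound hbound_lt hbound using h
  have hsup : ⨆ i, bound i < o := by
    refine Ordinal.lift_iSup_lt_of_lt_cof ?_ hbound_lt
    rw [← Ordinal.lift_cof]
    exact (lift_le_aleph0.2 mk_le_aleph0).trans_lt (aleph0_lt_lift.2 ho)
  obtain ⟨β, hβS, hsupβ, hβo⟩ := hS _ hsup
  obtain ⟨i, hi⟩ := hP β hβS hβo
  exact hbound i β ⟨hβS, hi⟩ ((Ordinal.le_iSup bound i).trans hsupβ) hβo

end CofinalBelow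

def ColumnsBounded (A : Set (ℕ × ℕ)) (N m : ℕ) : Prop :=
  ∀ n ≥ m, (Prod.mk n ⁻¹' A).ncard ≤ N

theorem finite_column_of_subset_delta {A : Set (ℕ × ℕ)} (hA : A ⊆ Delta) (n : ℕ) :
    (Prod.mk n ⁻¹' A).Finite :=
  (finite_Iic n).subset fun _ hk => hA hk

theorem exists_le_notMem_of_ncard_column_le {A : Set (ℕ × ℕ)} {n : ℕ} (hA : A ⊆ Delta)
    (h : (Prod.mk n ⁻¹' A).ncard ≤ n) : ∃ k ≤ n, (n, k) ∉ A := by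
  by_contra! hfull
  have hle : (Iic n).ncard ≤ (Prod.mk n ⁻¹' A).ncard :=
    ncard_le_ncard (fun k hk => hfull k hk) (finite_column_of_subset_delta hA n)
  rw [ncard_Iic_nat] at hle
  omega

theorem ColumnsBounded.exists_lt_of_finite {A : Set (ℕ × ℕ)} {N m : ℕ}
    (h : ColumnsBounded A N m) (hfin : {n | (Prod.mk n ⁻¹' A).ncard = N}.Finite) :
    ∃ N' < N, ∃ m', ColumnsBounded A N' m' := by
  obtain ⟨b, hb⟩ := hfin.bddAbove
  have hlt : ∀ n ≥ max m (b + 1), (Prod.mk n ⁻¹' A).ncard < N := fun n hn =>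
    (h n (le_of_max_le_left hn)).lt_of_ne fun heq => by
      have := hb heq
      omega
  have hN : N ≠ 0 := (Nat.zero_le _).trans_lt (hlt _ le_rfl) |>.ne'
  exact ⟨N - 1, Nat.sub_one_lt hN, max m (b + 1), fun n hn => Nat.le_sub_one_of_lt (hlt n hn)⟩

theorem exists_infinite_subset_delta_almost_disjoint {A₀ : Set (ℕ × ℕ)} {N : ℕ}
    (hA₀ : A₀ ⊆ Delta) (hfull : {n | (Prod.mk n ⁻¹' A₀).ncard = N}.Infinite) :
    ∃ C ⊆ Delta, C.Infinite ∧ ∀ m, ∀ A ⊆ Delta, ColumnsBounded A N m → (A₀ \ A).Finite →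
      (A ∩ C).Finite := by
  set X := {n | (Prod.mk n ⁻¹' A₀).ncard = N} \ Iio N
  set gap : ℕ → ℕ := fun n => sInf (Prod.mk n ⁻¹' A₀)ᶜ
  have hgap : ∀ n ∈ X, gap n ≤ n ∧ (n, gap n) ∉ A₀ := fun n hn => by
    obtain ⟨k, hkn, hk⟩ := exists_le_notMem_of_ncard_column_le hA₀
      (hn.1.trans_le (not_lt.1 hn.2))
    exact ⟨(Nat.sInf_le hk).trans hkn, Nat.sInf_mem (s := (Prod.mk n ⁻¹' A₀)ᶜ) ⟨k, hk⟩⟩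
  refine ⟨(fun n => (n, gap n)) '' X, ?_, ?_, ?_⟩
  · rintro _ ⟨n, hn, rfl⟩
    exact (hgap n hn).1
  · exact (hfull.sdiff (finite_Iio N)).image fun a _ b _ hab => congrArg Prod.fst hab
  · intro m A hA hbd hdiff
    obtain ⟨b, hb⟩ := (hdiff.image Prod.fst).bddAbove
    refine ((finite_Iio (max m (b + 1))).image fun n => (n, gap n)).subset ?_
    rintro _ ⟨hpA, n, hnX, rfl⟩
    refine ⟨n, mem_Iio.2 ?_, rfl⟩
    by_contra! hn
    have hsub : Prod.mk n ⁻¹' A₀ ⊆ Prod.mk n ⁻¹' A := fun k hk => by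
      by_contra hkA
      have := hb ⟨(n, k), ⟨hk, hkA⟩, rfl⟩
      omega
    have hcol := eq_of_subset_of_ncard_le hsub ((hbd n (le_of_max_le_left hn)).trans hnX.1.ge)
      (finite_column_of_subset_delta hA n)
    exact (hgap n hnX).2 (hcol ▸ hpA : gap n ∈ Prod.mk n ⁻¹' A₀)

theorem exists_infinite_ncard_column_eq {o : Ordinal} {A : Ordinal → Set (ℕ × ℕ)} {N m : ℕ}
    (ho : ℵ₀ < o.cof) (hcof : CofinalBelow o {β | ColumnsBounded (A β) N m})
    (hmin : ∀ N' < N, ∀ m', ¬ CofinalBelow o {β | ColumnsBounded (A β) N' m'}) :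
    ∃ β < o, ColumnsBounded (A β) N m ∧ {n | (Prod.mk n ⁻¹' A β).ncard = N}.Infinite := by
  by_contra! hfin
  obtain ⟨⟨N', m'⟩, hcof'⟩ := hcof.exists_fiber (ι := Fin N × ℕ) ho
    (P := fun i β => ColumnsBounded (A β) i.1 i.2) fun β hβ hβo => by
      obtain ⟨N', hN', m', h⟩ := ColumnsBounded.exists_lt_of_finite hβ (hfin β hβo hβ)
      exact ⟨(⟨N', hN'⟩, m'), h⟩
  exact hmin N' N'.isLt m' (hcof'.mono fun β hβ => hβ.2)

theorem stmt5 (κ : Cardinal) (hreg : κ.IsRegular) (hunc : Cardinal.aleph0 < κ)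
    (A : Ordinal → Set (ℕ × ℕ))
    (hmem : ∀ α < κ.ord, A α ∈ EDfin)
    (hmono : ∀ β α, β ≤ α → α < κ.ord → (A β \ A α).Finite) :
    ∃ B : Set (ℕ × ℕ), B ⊆ Delta ∧ (Delta \ B).Infinite ∧
      ∀ α < κ.ord, (A α \ B).Finite := by
  classical
  have ho : ℵ₀ < κ.ord.cof := hreg.cof_ord.symm ▸ hunc
  have hex : ∃ N m, CofinalBelow κ.ord {β | ColumnsBounded (A β) N m} := by
    obtain ⟨⟨N, m⟩, hcof⟩ := CofinalBelow.exists_fiber (S := univ) (ι := ℕ × ℕ) ho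
      (fun γ hγ => ⟨γ, trivial, le_rfl, hγ⟩) (P := fun i β => ColumnsBounded (A β) i.1 i.2)
      fun β _ hβ => let ⟨_, N, m, h⟩ := hmem β hβ; ⟨(N, m), h⟩
    exact ⟨N, m, hcof.mono fun β hβ => hβ.2⟩
  obtain ⟨m, hcof⟩ := Nat.find_spec hex
  obtain ⟨β₀, hβ₀, -, hfull⟩ := exists_infinite_ncard_column_eq ho hcof
    fun N' hN' m' h => Nat.find_min hex hN' ⟨m', h⟩
  obtain ⟨C, hCΔ, hCinf, hC⟩ :=
    exists_infinite_subset_delta_almost_disjoint (hmem β₀ hβ₀).1 hfull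
  refine ⟨Delta \ C, sdiff_subset, by rwa [sdiff_sdiff_cancel_left hCΔ], fun α hα => ?_⟩
  obtain ⟨β, hβ, hαβ₀β, hβo⟩ := hcof _ (max_lt hα hβ₀)
  have hAβC := hC m (A β) (hmem β hβo).1 hβ (hmono β₀ β (le_of_max_le_right hαβ₀β) hβo)
  refine ((hmono α β (le_of_max_le_left hαβ₀β) hβo).union hAβC).subset ?_
  rintro p ⟨hpα, hpB⟩
  by_cases hpβ : p ∈ A β
  · exact Or.inr ⟨hpβ, not_not.1 fun hpC => hpB ⟨(hmem α hα).1 hpα, hpC⟩⟩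
  · exact Or.inl ⟨hpα, hpβ⟩
end

section
/- The van der Waerden ideal W contains no cotowers: for every regular uncountable cardinal κ and every ⊆*-increasing sequence (A_α)_{α<κ} in W there is an infinite B ⊆ ω such that A_α ∩ B is finite for every α < κ. -/
open Set Cardinal

/-- The van der Waerden ideal: sets containing no arbitrarily long arithmetic
progressions, i.e. with a uniform bound on the lengths of their APs. -/
def vdWIdeal : Set (Set ℕ) :=
  {A | ∃ N : ℕ, ∀ a d l : ℕ, 0 < d → (∀ i < l, a + i * d ∈ A) → l ≤ N}

theorem stmt6 (κ : Cardinal) (hreg : κ.IsRegular) (hunc : Cardinal.aleph0 < κ)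
    (A : Ordinal → Set ℕ)
    (hmem : ∀ α < κ.ord, A α ∈ vdWIdeal)
    (hmono : ∀ β α, β ≤ α → α < κ.ord → (A β \ A α).Finite) :
    ∃ B : Set ℕ, B.Infinite ∧ ∀ α < κ.ord, (A α ∩ B).Finite := by
  -- `κ.ord` is positive
  have hpos : 0 < κ.ord := by
    have h1 : (0 : Cardinal) < κ := hreg.pos
    rwa [← Cardinal.ord_zero, Cardinal.ord_lt_ord]
  -- Step 1: a single bound `N` works cofinally often.
  obtain ⟨N, key⟩ : ∃ N : ℕ, ∀ α < κ.ord, ∃ γ, α ≤ γ ∧ γ < κ.ord ∧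
      ∀ a d l : ℕ, 0 < d → (∀ i < l, a + i * d ∈ A γ) → l ≤ N := by
    by_contra h
    push_neg at h
    choose g hg1 hg2 using h
    have hsup : iSup g < κ.ord :=
      Cardinal.iSup_lt_ord_lift_of_isRegular hreg (by simpa using hunc) hg1
    obtain ⟨N, hN⟩ := hmem _ hsup
    obtain ⟨a, d, l, hd, hmem', hlt⟩ := hg2 N (iSup g) (Ordinal.le_iSup g N) hsup
    exact absurd (hN a d l hd hmem') (not_le.2 hlt)
  -- any set with bound `N` misses a point of every block `[k(N+1), (k+1)(N+1))`
  have hmiss : ∀ γ : Ordinal, (∀ a d l : ℕ, 0 < d → (∀ i < l, a + i * d ∈ A γ) → l ≤ N) →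
      ∀ k : ℕ, ∃ r, r < N + 1 ∧ k * (N + 1) + r ∉ A γ := by
    intro γ hγ k
    by_contra h
    push_neg at h
    have hle : N + 1 ≤ N := hγ (k * (N + 1)) 1 (N + 1) one_pos
      (fun i hi => by simpa using h i hi)
    omega
  -- points in block `k` have `·/(N+1) = k`
  have hdiv : ∀ k x : ℕ, k * (N + 1) ≤ x → x < k * (N + 1) + (N + 1) → x / (N + 1) = k := by
    intro k x h1 h2
    exact Nat.div_eq_of_lt_le h1 (by rw [Nat.succ_mul]; omega)
  -- Step 2: there is a "good triple" : a selector through the blocks which is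
  -- almost disjoint from every `A β` with bound `N`.
  have main : ∃ γ, γ < κ.ord ∧ ∃ K : Set ℕ, K.Infinite ∧ ∃ c : ℕ → ℕ,
      (∀ k ∈ K, k * (N + 1) ≤ c k ∧ c k < k * (N + 1) + (N + 1)) ∧
      ∀ β, γ ≤ β → β < κ.ord →
        (∀ a d l : ℕ, 0 < d → (∀ i < l, a + i * d ∈ A β) → l ≤ N) →
        {k ∈ K | c k ∈ A β}.Finite := by
    by_contra hno
    push_neg at hno
    -- iterate: at stage `j` we have `j` distinct selectors through the blocks
    -- (on an infinite set of blocks) all landing in some fixed `A γ` with bound `N`.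
    have step : ∀ j : ℕ, ∃ γ, γ < κ.ord ∧
        (∀ a d l : ℕ, 0 < d → (∀ i < l, a + i * d ∈ A γ) → l ≤ N) ∧
        ∃ K : Set ℕ, K.Infinite ∧ ∃ c : ℕ → ℕ → ℕ,
        ∀ k ∈ K, ∀ i < j, (c i k ∈ A γ ∧ k * (N + 1) ≤ c i k ∧ c i k < k * (N + 1) + (N + 1)) ∧
          ∀ i' < j, i' ≠ i → c i' k ≠ c i k := by
      intro j
      induction j with
      | zero =>
        obtain ⟨γ, _, hγlt, hγbd⟩ := key 0 hpos
        exact ⟨γ, hγlt, hγbd, Set.univ, Set.infinite_univ, fun _ _ => 0,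
          fun k _ i hi => absurd hi (Nat.not_lt_zero i)⟩
      | succ j ih =>
        obtain ⟨γ, hγlt, hγbd, K, hK, c, hc⟩ := ih
        choose r hr1 hr2 using hmiss γ hγbd
        obtain ⟨β, hγβ, hβlt, hβbd, hKinf0⟩ :=
          hno γ hγlt K hK (fun k => k * (N + 1) + r k)
            (fun k _ => ⟨Nat.le_add_right _ _, by
              show k * (N + 1) + r k < k * (N + 1) + (N + 1)
              have := hr1 k; omega⟩)
        have hKinf : ¬ ({k ∈ K | k * (N + 1) + r k ∈ A β} : Set ℕ).Finite := hKinf0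
        -- blocks containing a point of `A γ \ A β`
        set Bad : Set ℕ := (fun x => x / (N + 1)) '' (A γ \ A β) with hBad
        have hBadfin : Bad.Finite := (hmono γ β hγβ hβlt).image _
        set K' : Set ℕ := {k ∈ K | k * (N + 1) + r k ∈ A β} \ Bad with hK'
        have hK'inf : K'.Infinite := Set.Infinite.diff hKinf hBadfin
        refine ⟨β, hβlt, hβbd, K', hK'inf,
          fun i k => if i = j then k * (N + 1) + r k else c i k, ?_⟩
        intro k hk
        obtain ⟨⟨hkK, hkA⟩, hkBad⟩ := hk
        have hcK := hc k hkK
        -- old selectors stay in `A β` on `K'`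
        have hold : ∀ i < j, c i k ∈ A β := by
          intro i hi
          by_contra hnot
          obtain ⟨hmemγ, hb1, hb2⟩ := (hcK i hi).1
          exact hkBad ⟨c i k, ⟨hmemγ, hnot⟩, hdiv k (c i k) hb1 hb2⟩
        intro i hi
        beta_reduce
        constructor
        · by_cases hij : i = j
          · rw [if_pos hij]
            exact ⟨hkA, Nat.le_add_right _ _, by have := hr1 k; omega⟩
          · have hij' : i < j := by omega
            rw [if_neg hij]
            exact ⟨hold i hij', (hcK i hij').1.2.1, (hcK i hij').1.2.2⟩
        · intro i' hi' hne
          by_cases hij : i = j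
          · have hi'j : i' < j := by omega
            rw [if_neg (by omega : ¬ i' = j), if_pos hij]
            intro heq
            exact hr2 k (heq ▸ (hcK i' hi'j).1.1)
          · have hij' : i < j := by omega
            by_cases hi'j : i' = j
            · rw [if_pos hi'j, if_neg hij]
              intro heq
              exact hr2 k (heq.symm ▸ (hcK i hij').1.1)
            · have hi'j' : i' < j := by omega
              rw [if_neg hij, if_neg hi'j]
              exact (hcK i hij').2 i' hi'j' hne
    -- stage `N+1` is impossible: a block of size `N+1` would be inside `A γ`.
    obtain ⟨γ, _, hγbd, K, hK, c, hc⟩ := step (N + 1)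
    obtain ⟨k, hk⟩ := hK.nonempty
    have hck := hc k hk
    have hinj : Set.InjOn (fun i => c i k) (Finset.range (N + 1)) := by
      intro i hi i' hi' heq
      simp only [Finset.coe_range, Set.mem_Iio] at hi hi'
      by_contra hne
      exact (hck i' hi').2 i hi hne heq
    set T : Finset ℕ := (Finset.range (N + 1)).image (fun i => c i k) with hT
    have hTcard : T.card = N + 1 := by
      rw [hT, Finset.card_image_of_injOn hinj, Finset.card_range]
    have hTsub : T ⊆ Finset.Ico (k * (N + 1)) (k * (N + 1) + (N + 1)) := by
      intro x hx
      rw [hT, Finset.mem_image] at hx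
      obtain ⟨i, hi, rfl⟩ := hx
      rw [Finset.mem_range] at hi
      rw [Finset.mem_Ico]
      exact ⟨(hck i hi).1.2.1, (hck i hi).1.2.2⟩
    have hTeq : T = Finset.Ico (k * (N + 1)) (k * (N + 1) + (N + 1)) :=
      Finset.eq_of_subset_of_card_le hTsub (by rw [Nat.card_Ico, hTcard]; omega)
    have hall : ∀ i < N + 1, k * (N + 1) + i * 1 ∈ A γ := by
      intro i hi
      have hmem' : k * (N + 1) + i * 1 ∈ T := by
        rw [hTeq, Finset.mem_Ico]
        omega
      rw [hT, Finset.mem_image] at hmem'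
      obtain ⟨i', hi', heq⟩ := hmem'
      rw [Finset.mem_range] at hi'
      exact heq ▸ (hck i' hi').1.1
    have := hγbd (k * (N + 1)) 1 (N + 1) one_pos hall
    omega
  -- Step 3: extract `B`.
  obtain ⟨γ, hγlt, K, hK, c, hblk, hgood⟩ := main
  have hinjK : Set.InjOn c K := by
    intro k hk k' hk' heq
    have h1 := hblk k hk
    have h2 := hblk k' hk'
    have h3 := hdiv k (c k) h1.1 h1.2
    have h4 := hdiv k' (c k') h2.1 h2.2
    rw [← h3, ← h4, heq]
  refine ⟨c '' K, (Set.infinite_image_iff hinjK).2 hK, ?_⟩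
  intro α hα
  obtain ⟨β, hle, hβlt, hβbd⟩ := key (max α γ) (max_lt hα hγlt)
  have hαβ : α ≤ β := le_trans (le_max_left _ _) hle
  have hγβ : γ ≤ β := le_trans (le_max_right _ _) hle
  have hsub : A α ∩ (c '' K) ⊆ (A α \ A β) ∪ (c '' {k ∈ K | c k ∈ A β}) := by
    rintro x ⟨hxA, k, hkK, rfl⟩
    by_cases hxβ : c k ∈ A β
    · exact Or.inr ⟨k, ⟨hkK, hxβ⟩, rfl⟩
    · exact Or.inl ⟨hxA, hxβ⟩
  exact Set.Finite.subset ((hmono α β hαβ hβlt).union ((hgood β hγβ hβlt hβbd).image c)) hsub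
end

section
/- The uniform density zero ideal Z_u contains no cotowers: for every regular uncountable cardinal κ and every ⊆*-increasing sequence (A_α)_{α<κ} in Z_u there is an infinite B ⊆ ω with A_α ∩ B finite for all α < κ. -/
open Set Cardinal

/-- The uniform density zero ideal Z_u:
`A ∈ Z_u` iff `S_n(A)/n → 0` where `S_n(A) = max_k |A ∩ [k, k+n)|`. -/
def Zu : Set (Set ℕ) :=
  {A | ∀ ε : ℝ, 0 < ε → ∃ N : ℕ, ∀ n ≥ N, ∀ k : ℕ,
    ((A ∩ Set.Ico k (k + n)).ncard : ℝ) ≤ ε * n}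

noncomputable section ZuTowerAux

/-- window count -/
noncomputable def cnt (A : Set ℕ) (n k : ℕ) : ℕ := (A ∩ Set.Ico k (k + n)).ncard

lemma cnt_le (A : Set ℕ) (n k : ℕ) : cnt A n k ≤ n := by
  have h1 : (A ∩ Set.Ico k (k + n)).ncard ≤ (Set.Ico k (k + n)).ncard :=
    Set.ncard_le_ncard Set.inter_subset_right (Set.finite_Ico _ _)
  have h2 : (Set.Ico k (k + n)).ncard = n := by
    rw [← Finset.coe_Ico, Set.ncard_coe_finset, Nat.card_Ico]
    omega
  simp only [cnt]
  omega

/-- values attained infinitely often -/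
def Sset (A : Set ℕ) (n : ℕ) : Set ℕ := {m | {k | m ≤ cnt A n k}.Infinite}

lemma Sset_zero_mem (A : Set ℕ) (n : ℕ) : 0 ∈ Sset A n := by
  have : {k : ℕ | 0 ≤ cnt A n k} = Set.univ := by ext k; simp
  simpa [Sset, this] using Set.infinite_univ

lemma Sset_bdd (A : Set ℕ) (n : ℕ) : n ∈ upperBounds (Sset A n) := by
  intro m hm
  obtain ⟨k, hk⟩ := hm.nonempty
  exact le_trans hk (cnt_le A n k)

/-- limsup of window counts -/
noncomputable def climit (A : Set ℕ) (n : ℕ) : ℕ := sSup (Sset A n)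

lemma climit_mem (A : Set ℕ) (n : ℕ) : climit A n ∈ Sset A n :=
  Nat.sSup_mem ⟨0, Sset_zero_mem A n⟩ ⟨n, Sset_bdd A n⟩

lemma climit_freq (A : Set ℕ) (n : ℕ) : {k | climit A n ≤ cnt A n k}.Infinite :=
  climit_mem A n

lemma climit_le (A : Set ℕ) (n : ℕ) : climit A n ≤ n :=
  Sset_bdd A n (climit_mem A n)

lemma climit_ev (A : Set ℕ) (n : ℕ) : {k | climit A n + 1 ≤ cnt A n k}.Finite := by
  by_contra h
  have hmem : climit A n + 1 ∈ Sset A n := h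
  have := le_csSup ⟨n, Sset_bdd A n⟩ hmem
  simp only [climit] at this
  omega

lemma climit_mono {A A' : Set ℕ} (h : (A \ A').Finite) (n : ℕ) :
    climit A n ≤ climit A' n := by
  apply csSup_le_csSup ⟨n, Sset_bdd A' n⟩ ⟨0, Sset_zero_mem A n⟩
  intro m hm
  obtain ⟨M, hM⟩ := h.bddAbove
  have hsub : {k | m ≤ cnt A n k} \ Set.Iic M ⊆ {k | m ≤ cnt A' n k} := by
    rintro k ⟨hk, hk2⟩
    simp only [Set.mem_Iic, not_le] at hk2
    have hss : A ∩ Set.Ico k (k + n) ⊆ A' ∩ Set.Ico k (k + n) := by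
      rintro x ⟨hxA, hxI⟩
      refine ⟨?_, hxI⟩
      by_contra hxA'
      have hxd : x ∈ A \ A' := ⟨hxA, hxA'⟩
      have hxM : x ≤ M := hM hxd
      have : k ≤ x := hxI.1
      omega
    have : cnt A n k ≤ cnt A' n k :=
      Set.ncard_le_ncard hss ((Set.finite_Ico _ _).inter_of_right _)
    exact le_trans hk this
  exact (hm.diff (Set.finite_Iic M)).mono hsub

end ZuTowerAux

theorem stmt7 (κ : Cardinal) (hreg : κ.IsRegular) (hunc : Cardinal.aleph0 < κ)
    (A : Ordinal → Set ℕ)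
    (hmem : ∀ α < κ.ord, A α ∈ Zu)
    (hmono : ∀ β α, β ≤ α → α < κ.ord → (A β \ A α).Finite) :
    ∃ B : Set ℕ, B.Infinite ∧ ∀ α < κ.ord, (A α ∩ B).Finite := by
  classical
  have h0ord : (0 : Ordinal) < κ.ord := by
    have h0 : (0 : Cardinal) < κ := Cardinal.aleph0_pos.trans hunc
    have := Cardinal.ord_lt_ord.mpr h0
    simpa using this
  -- for each n, pick γ n < κ.ord maximizing climit (A ·) n
  have hγ : ∀ n : ℕ, ∃ γ, γ < κ.ord ∧ ∀ β < κ.ord, climit (A β) n ≤ climit (A γ) n := by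
    intro n
    set V : Set ℕ := (fun β => climit (A β) n) '' Set.Iio κ.ord with hV
    have hne : V.Nonempty := ⟨_, ⟨0, h0ord, rfl⟩⟩
    have hbdd : V ⊆ Set.Iic n := by
      rintro m ⟨β, _, rfl⟩; exact climit_le (A β) n
    have hbdd' : BddAbove V := ⟨n, hbdd⟩
    obtain ⟨γ, hγlt, hγeq⟩ := Nat.sSup_mem hne hbdd'
    exact ⟨γ, hγlt, fun β hβ =>
      le_trans (le_csSup hbdd' ⟨β, hβ, rfl⟩) (le_of_eq hγeq.symm)⟩
  choose γ hγlt hγmax using hγ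
  set αs : Ordinal := ⨆ n, γ n with hαsdef
  have hαs : αs < κ.ord := by
    rw [hαsdef]
    refine Cardinal.iSup_lt_ord_lift_of_isRegular hreg ?_ hγlt
    rw [Cardinal.mk_nat, Cardinal.lift_aleph0]; exact hunc
  have hγle : ∀ n, γ n ≤ αs := fun n => le_ciSup (Ordinal.bddAbove_range γ) n
  -- stabilization above αs
  have stab : ∀ α, αs ≤ α → α < κ.ord → ∀ n, climit (A α) n = climit (A αs) n := by
    intro α hle hlt n
    have h1 : climit (A αs) n ≤ climit (A α) n := climit_mono (hmono _ _ hle hlt) n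
    have h2 : climit (A α) n ≤ climit (A (γ n)) n := hγmax n α hlt
    have h3 : climit (A (γ n)) n ≤ climit (A αs) n :=
      climit_mono (hmono _ _ (hγle n) hαs) n
    omega
  -- choose scale n0 with all window counts < n0
  obtain ⟨N, hN⟩ := hmem αs hαs (1 / 2) (by norm_num)
  set n0 : ℕ := N + 1 with hn0
  have hcntlt : ∀ k, cnt (A αs) n0 k < n0 := by
    intro k
    have h := hN n0 (by omega) k
    have hpos : (0 : ℝ) < n0 := by positivity
    have : (cnt (A αs) n0 k : ℝ) < n0 := by
      simp only [cnt]
      nlinarith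
    exact_mod_cast this
  set c : ℕ := climit (A αs) n0 with hc
  -- choose a hole in every window
  have hb : ∀ k : ℕ, ∃ x, x ∈ Set.Ico k (k + n0) ∧ x ∉ A αs := by
    intro k
    by_contra h
    push_neg at h
    have hsub : Set.Ico k (k + n0) ⊆ A αs ∩ Set.Ico k (k + n0) :=
      fun x hx => ⟨h x hx, hx⟩
    have h1 : (Set.Ico k (k + n0)).ncard ≤ cnt (A αs) n0 k :=
      Set.ncard_le_ncard hsub ((Set.finite_Ico _ _).inter_of_right _)
    have h2 : (Set.Ico k (k + n0)).ncard = n0 := by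
      rw [← Finset.coe_Ico, Set.ncard_coe_finset, Nat.card_Ico]; omega
    have := hcntlt k
    omega
  choose b hbmem hbnot using hb
  set K : Set ℕ := {k | c ≤ cnt (A αs) n0 k} with hK
  have hKinf : K.Infinite := climit_freq (A αs) n0
  refine ⟨b '' K, ?_, ?_⟩
  · -- infinite
    apply Set.infinite_of_forall_exists_gt
    intro a
    obtain ⟨k, hk, hak⟩ := hKinf.exists_gt a
    exact ⟨b k, ⟨k, hk, rfl⟩, lt_of_lt_of_le hak (hbmem k).1⟩
  · -- almost disjoint from every A α
    have key : ∀ α, αs ≤ α → α < κ.ord → (A α ∩ b '' K).Finite := by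
      intro α hle hlt
      obtain ⟨M1, hM1⟩ := (hmono αs α hle hlt).bddAbove
      have hev : {k | c + 1 ≤ cnt (A α) n0 k}.Finite := by
        have h := climit_ev (A α) n0
        rwa [stab α hle hlt n0] at h
      obtain ⟨M2, hM2⟩ := hev.bddAbove
      set M : ℕ := max M1 M2 + 1 with hM
      have main : ∀ k ∈ K, M ≤ k → b k ∉ A α := by
        intro k hk hklarge hbin
        have hsub : insert (b k) (A αs ∩ Set.Ico k (k + n0)) ⊆ A α ∩ Set.Ico k (k + n0) := by
          intro x hx
          rcases hx with rfl | ⟨hxA, hxI⟩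
          · exact ⟨hbin, hbmem k⟩
          · refine ⟨?_, hxI⟩
            by_contra hxA'
            have hxd : x ≤ M1 := hM1 ⟨hxA, hxA'⟩
            have : k ≤ x := hxI.1
            omega
        have hfin : (A αs ∩ Set.Ico k (k + n0)).Finite :=
          (Set.finite_Ico _ _).inter_of_right _
        have h1 : (insert (b k) (A αs ∩ Set.Ico k (k + n0))).ncard ≤ cnt (A α) n0 k :=
          Set.ncard_le_ncard hsub ((Set.finite_Ico _ _).inter_of_right _)
        have h2 : (insert (b k) (A αs ∩ Set.Ico k (k + n0))).ncard
            = cnt (A αs) n0 k + 1 :=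
          Set.ncard_insert_of_notMem (fun h => hbnot k h.1) hfin
        have hck : c ≤ cnt (A αs) n0 k := hk
        have : c + 1 ≤ cnt (A α) n0 k := by omega
        have := hM2 this
        omega
      have hsub2 : A α ∩ b '' K ⊆ b '' (K ∩ Set.Iio M) := by
        rintro x ⟨hxA, k, hk, rfl⟩
        refine ⟨k, ⟨hk, ?_⟩, rfl⟩
        by_contra h
        exact main k hk (by simpa using h) hxA
      exact (((Set.finite_Iio M).inter_of_right K).image b).subset hsub2
    intro α hαlt
    set α' : Ordinal := max α αs with hα'
    have hα'lt : α' < κ.ord := max_lt hαlt hαs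
    have hsplit : A α ∩ b '' K ⊆ (A α \ A α') ∪ (A α' ∩ b '' K) := by
      rintro x ⟨hxA, hxB⟩
      by_cases hx' : x ∈ A α'
      · exact Or.inr ⟨hx', hxB⟩
      · exact Or.inl ⟨hxA, hx'⟩
    exact ((hmono α α' (le_max_left _ _) hα'lt).union
      (key α' (le_max_right _ _) hα'lt)).subset hsplit
end

section
/- The ideal G_fc of graphs with finite chromatic number contains no cotowers: for every regular uncountable κ and every ⊆*-increasing sequence (E_α)_{α<κ} in G_fc there is an infinite B ⊆ [ω]² with E_α ∩ B finite for all α < κ. -/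
open Set Cardinal

/-- The set of unordered pairs of distinct naturals, i.e. [ω]². -/
def Edges : Set (Sym2 ℕ) := {e | ¬ e.IsDiag}

/-- The ideal of graphs with finite chromatic number. -/
def Gfc : Set (Set (Sym2 ℕ)) :=
  {E | E ⊆ Edges ∧ ∃ (m : ℕ) (c : ℕ → Fin m),
    ∀ x y : ℕ, x ≠ y → Sym2.mk x y ∈ E → c x ≠ c y}

/-!
Suppose every infinite B ⊆ [ω]² meets some E_α in an infinite set. Applied to stars, this
yields vertices v₀, v₁, … and ordinals β₀, β₁, … < κ such that each v_i is joined in E_{β_i}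
to every later v_j. By regularity and uncountability of κ, γ = sup β_i < κ, and since
E_{β_i} ⊆* E_γ, each v_i is joined in E_γ to all but finitely many v_j. Then no finite colouring
of E_γ exists: infinitely many v_j share a colour, and one of them is joined to another.
-/

open Filter Function

theorem exists_infinite_star {ι : Type*} (F : ι → Set (Sym2 ℕ))
    (hF : ∀ B ⊆ Edges, B.Infinite → ∃ i, (F i ∩ B).Infinite) (v : ℕ) {Y : Set ℕ}
    (hY : Y.Infinite) :
    ∃ i, {y ∈ Y | y ≠ v ∧ s(v, y) ∈ F i}.Infinite := by
  have hinj : InjOn (fun y => s(v, y)) (Y \ {v}) := fun _ _ _ _ h => Sym2.congr_right.1 h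
  have hstar : (fun y => s(v, y)) '' (Y \ {v}) ⊆ Edges := by
    rintro _ ⟨y, hy, rfl⟩
    simpa [Edges] using fun h => hy.2 h.symm
  obtain ⟨i, hi⟩ := hF _ hstar ((hY.sdiff (finite_singleton v)).image hinj)
  rw [inter_comm, ← image_inter_preimage] at hi
  exact ⟨i, (hi.of_image _).mono fun y hy => ⟨hy.1.1, hy.1.2, hy.2⟩⟩

theorem exists_injective_seq_forward_mem {ι : Type*} (F : ι → Set (Sym2 ℕ))
    (hF : ∀ B ⊆ Edges, B.Infinite → ∃ i, (F i ∩ B).Infinite) :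
    ∃ (v : ℕ → ℕ) (b : ℕ → ι), Injective v ∧ ∀ i j, i < j → s(v i, v j) ∈ F (b i) := by
  choose b hb using fun (v : ℕ) (Y : {Y : Set ℕ // Y.Infinite}) =>
    exists_infinite_star F hF v Y.2
  let pt : {Y : Set ℕ // Y.Infinite} → ℕ := fun Y => Y.2.nonempty.some
  let next : {Y : Set ℕ // Y.Infinite} → {Y : Set ℕ // Y.Infinite} :=
    fun Y => ⟨_, hb (pt Y) Y⟩
  let Y : ℕ → {Y : Set ℕ // Y.Infinite} := fun n => next^[n] ⟨univ, infinite_univ⟩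
  have hY : Antitone fun n => (Y n).1 := antitone_nat_of_succ_le fun n => by
    change (next^[n + 1] _).1 ⊆ _
    rw [iterate_succ_apply']
    exact fun y hy => hy.1
  have hnext : ∀ i j, i < j → pt (Y j) ∈ (next (Y i)).1 := fun i j hij => by
    rw [← iterate_succ_apply' next]
    exact hY hij (Y j).2.nonempty.some_mem
  refine ⟨fun n => pt (Y n), fun n => b (pt (Y n)) (Y n), ?_, fun i j hij => (hnext i j hij).2.2⟩
  exact Injective.of_lt_imp_ne fun i j hij => (hnext i j hij).2.1.symm

theorem eventually_mem_of_diff_finite {ι α : Type*} {A A' : Set α} {w : ι → α} (hw : Injective w)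
    (hAA' : (A \ A').Finite) (hA : ∀ᶠ j in cofinite, w j ∈ A) : ∀ᶠ j in cofinite, w j ∈ A' := by
  filter_upwards [hA, hw.tendsto_cofinite.eventually hAA'.eventually_cofinite_notMem]
    with j hj hj' using by_contra fun h => hj' ⟨hj, h⟩

theorem notMem_Gfc_of_eventually_adj {ι : Type*} [Infinite ι] {E' : Set (Sym2 ℕ)} {v : ι → ℕ}
    (hv : Injective v) (hadj : ∀ i, ∀ᶠ j in cofinite, s(v i, v j) ∈ E') : E' ∉ Gfc := by
  rintro ⟨-, m, c, hc⟩
  obtain ⟨k, hk⟩ := Finite.exists_infinite_fiber (c ∘ v)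
  have hfreq : ∃ᶠ j in cofinite, c (v j) = k :=
    frequently_cofinite_iff_infinite.2 (infinite_coe_iff.1 hk)
  obtain ⟨i, hi⟩ := hfreq.exists
  obtain ⟨j, hj, hij, hji⟩ :=
    (hfreq.and_eventually ((hadj i).and (eventually_cofinite_ne i))).exists
  exact hc _ _ (hv.ne hji.symm) hij (hi.trans hj.symm)

theorem stmt8 (κ : Cardinal) (hreg : κ.IsRegular) (hunc : Cardinal.aleph0 < κ)
    (E : Ordinal → Set (Sym2 ℕ))
    (hmem : ∀ α < κ.ord, E α ∈ Gfc)
    (hmono : ∀ β α, β ≤ α → α < κ.ord → (E β \ E α).Finite) :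
    ∃ B : Set (Sym2 ℕ), B ⊆ Edges ∧ B.Infinite ∧
      ∀ α < κ.ord, (E α ∩ B).Finite := by
  by_contra hcon
  push Not at hcon
  obtain ⟨v, b, hv, hadj⟩ := exists_injective_seq_forward_mem (fun α : Iio κ.ord => E α)
    fun B hB hBinf => by
      obtain ⟨α, hα, hαB⟩ := hcon B hB hBinf
      exact ⟨⟨α, hα⟩, hαB⟩
  set γ := ⨆ i, (b i : Ordinal)
  have hγ : γ < κ.ord :=
    Ordinal.lift_iSup_lt_of_lt_cof (by simpa [hreg.cof_ord] using hunc) fun i => (b i).2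
  refine notMem_Gfc_of_eventually_adj hv (fun i => ?_) (hmem γ hγ)
  refine eventually_mem_of_diff_finite (fun _ _ h => hv (Sym2.congr_right.1 h))
    (hmono _ γ (Ordinal.le_iSup (fun i => (b i : Ordinal)) i) hγ) ?_
  rw [Nat.cofinite_eq_atTop]
  exact (eventually_gt_atTop i).mono (hadj i)
end

section
/- Let I(φ⃗) be a fragmented ideal based on a sequence μ⃗ = (μ_n) of measures μ_n concentrated on a partition (P_n) of ω into finite sets, and suppose that for every X in the dual filter of I(μ⃗) one has limsup_n max{μ_n({k}) : k ∈ P_n ∩ X} > 0. Then I(μ⃗) contains no cotowers: every ⊆*-increasing sequence (A_α)_{α<κ} in I(μ⃗) with κ regular uncountable has a pseudounion. -/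
/-!
Because κ has uncountable cofinality, one bound `M` on the block measures serves a cofinal set
of the `A α`. Call block `n` δ-swallowed if its atoms of weight at least `δ` all lie in one of
these `A α`. The atoms `k ∈ P n` for which block `n` is `μ n {k}`-swallowed form a set whose
trace on every block lies inside one swallowed layer, hence a member of the ideal; the limsup
hypothesis applied to its complement yields `δ > 0` and infinitely many blocks that are not
δ-swallowed.

A cofinal `A β` contains at most `M / δ` atoms of weight `≥ δ` per block. Fix `α₀` for which the
number of such atoms that `A α₀` holds infinitely often (on the unswallowed blocks) is maximal,
and pick in each of those blocks an atom outside `A α₀`. The resulting infinite set `Z` is almost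
disjoint from every later `A β`: otherwise `A β` would hold one more atom than `A α₀` on
infinitely many of these blocks. Hence `Zᶜ` is a pseudounion.
-/

open Set Cardinal

/-- The fragmented ideal generated by the sequence of measures `μ` on the blocks `P`. -/
def fragIdeal (P : ℕ → Set ℕ) (μ : ℕ → Set ℕ → ℝ) : Set (Set ℕ) :=
  {A | ∃ M : ℝ, ∀ n, μ n (A ∩ P n) ≤ M}

open Filter Function

universe u

theorem Cardinal.IsRegular.exists_nat_cofinal {κ : Cardinal.{u}} (hreg : κ.IsRegular)
    (hunc : ℵ₀ < κ) (p : ℕ → Ordinal.{u} → Prop) (h : ∀ α < κ.ord, ∃ m, p m α) :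
    ∃ m, ∀ γ < κ.ord, ∃ α, γ ≤ α ∧ α < κ.ord ∧ p m α := by
  by_contra! hbdd
  choose γ hγκ hγ using hbdd
  have hsup : ⨆ m, γ m < κ.ord := by
    refine Ordinal.lift_iSup_lt_of_lt_cof ?_ hγκ
    simpa [hreg.cof_ord] using hunc
  obtain ⟨m, hm⟩ := h _ hsup
  exact hγ m _ (Ordinal.le_iSup γ m) hsup hm

section Additive

variable {α : Type*} {ν : Set α → ℝ} {S : Set α}

theorem measure_empty_of_additive
    (hadd : ∀ s ⊆ S, ∀ t ⊆ S, Disjoint s t → ν (s ∪ t) = ν s + ν t) : ν ∅ = 0 := by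
  have h := hadd ∅ (empty_subset _) ∅ (empty_subset _) (disjoint_empty _)
  rw [union_empty] at h
  linarith

theorem measure_mono_of_additive (hpos : ∀ s, 0 ≤ ν s)
    (hadd : ∀ s ⊆ S, ∀ t ⊆ S, Disjoint s t → ν (s ∪ t) = ν s + ν t)
    {s t : Set α} (ht : t ⊆ S) (hst : s ⊆ t) : ν s ≤ ν t := by
  have h := hadd s (hst.trans ht) (t \ s) (sdiff_subset.trans ht) disjoint_sdiff_right
  rw [union_sdiff_cancel hst] at h
  linarith [hpos (t \ s)]

theorem ncard_mul_le_measure_of_additive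
    (hadd : ∀ s ⊆ S, ∀ t ⊆ S, Disjoint s t → ν (s ∪ t) = ν s + ν t)
    {s : Set α} (hs : s.Finite) (hsS : s ⊆ S) {c : ℝ} (hc : ∀ k ∈ s, c ≤ ν {k}) :
    s.ncard * c ≤ ν s := by
  induction s, hs using Set.Finite.induction_on with
  | empty => simp [measure_empty_of_additive hadd]
  | @insert a s ha hs ih =>
    have hsS' : s ⊆ S := (subset_insert a s).trans hsS
    rw [ncard_insert_of_notMem ha hs, ← singleton_union,
      hadd {a} (singleton_subset_iff.2 (hsS (mem_insert a s))) s hsS'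
        (disjoint_singleton_left.2 ha)]
    push_cast
    linarith [hc a (mem_insert a s), ih hsS' fun k hk => hc k (mem_insert_of_mem a hk)]

end Additive

theorem Set.Finite.setOf_inter_nonempty {α β : Type*} {L : β → Set α}
    (hL : Pairwise (Disjoint on L)) {E : Set α} (hE : E.Finite) :
    {n | (L n ∩ E).Nonempty}.Finite := by
  refine (hE.biUnion fun x _ => Subsingleton.finite (s := {n | x ∈ L n})
    fun m hm n hn => ?_).subset ?_
  · by_contra hne
    exact disjoint_left.1 (hL hne) hm hn
  · rintro n ⟨x, hxL, hxE⟩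
    exact mem_biUnion hxE hxL

theorem ncard_inter_lt_ncard_inter {α : Type*} {s t L : Set α} {x : α} (hL : L.Finite)
    (hst : s ∩ L ⊆ t) (hxL : x ∈ L) (hxt : x ∈ t) (hxs : x ∉ s) :
    (s ∩ L).ncard < (t ∩ L).ncard :=
  ncard_lt_ncard ((ssubset_iff_of_subset (subset_inter hst inter_subset_right)).2
    ⟨x, ⟨hxt, hxL⟩, fun hx => hxs hx.1⟩) (hL.subset inter_subset_right)

section InfOftenLevel

open Classical

noncomputable def infOftenLevel (W : Set ℕ) (f : ℕ → ℕ) (N : ℕ) : ℕ :=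
  Nat.findGreatest (fun c => {n ∈ W | c ≤ f n}.Infinite) N

variable {W : Set ℕ} {f : ℕ → ℕ} {N : ℕ}

theorem infOftenLevel_le : infOftenLevel W f N ≤ N :=
  Nat.findGreatest_le N

theorem infinite_setOf_infOftenLevel_le (hW : W.Infinite) :
    {n ∈ W | infOftenLevel W f N ≤ f n}.Infinite :=
  Nat.findGreatest_spec (P := fun c => {n ∈ W | c ≤ f n}.Infinite) (Nat.zero_le N)
    (by simpa using hW)

theorem le_infOftenLevel (hf : ∀ n ∈ W, f n ≤ N) {c : ℕ} (hc : {n ∈ W | c ≤ f n}.Infinite) :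
    c ≤ infOftenLevel W f N := by
  obtain ⟨n, hnW, hcn⟩ := hc.nonempty
  exact Nat.le_findGreatest (hcn.trans (hf n hnW)) hc

end InfOftenLevel

theorem exists_infinite_eventually_finite_inter {ι : Type*} [Preorder ι] [Nonempty ι]
    {B : ι → Set ℕ} (hB : ∀ i j, i ≤ j → (B i \ B j).Finite)
    {L : ℕ → Set ℕ} (hLfin : ∀ n, (L n).Finite) (hLdisj : Pairwise (Disjoint on L))
    {N : ℕ} (hN : ∀ i n, (B i ∩ L n).ncard ≤ N) (hW : {n | ∀ i, ¬ L n ⊆ B i}.Infinite) :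
    ∃ i₀, ∃ Z : Set ℕ, Z.Infinite ∧ ∀ i, i₀ ≤ i → (Z ∩ B i).Finite := by
  set W := {n | ∀ i, ¬ L n ⊆ B i}
  set τ : ι → ℕ := fun i => infOftenLevel W (fun n => (B i ∩ L n).ncard) N
  obtain ⟨_, ⟨i₀, rfl⟩, hi₀⟩ := exists_max_image (range τ) id
    ((finite_Iic N).subset (range_subset_iff.2 fun _ => infOftenLevel_le)) (range_nonempty τ)
  set W' := {n ∈ W | τ i₀ ≤ (B i₀ ∩ L n).ncard}
  have hW' : W'.Infinite := infinite_setOf_infOftenLevel_le hW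
  choose! z hzL hzB using fun n (hn : n ∈ W') => not_subset.1 (hn.1 i₀)
  refine ⟨i₀, z '' W', hW'.image fun m hm n hn hmn => ?_, fun i hi => ?_⟩
  · by_contra hne
    exact disjoint_left.1 (hLdisj hne) (hzL m hm) (hmn ▸ hzL n hn)
  by_contra hinf
  have hC : {n ∈ W' | z n ∈ B i}.Infinite := fun hfin =>
    hinf ((hfin.image z).subset fun _ ⟨⟨n, hn, hzn⟩, hx⟩ => ⟨n, ⟨hn, hzn ▸ hx⟩, hzn⟩)
  -- Off the finitely many blocks meeting `B i₀ \ B i`, the set `B i` holds every atom of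
  -- `B i₀` and also the chosen atom outside `B i₀`.
  have hgrow : {n ∈ W | τ i₀ + 1 ≤ (B i ∩ L n).ncard}.Infinite := by
    refine (hC.sdiff ((hB i₀ i hi).setOf_inter_nonempty hLdisj)).mono ?_
    rintro n ⟨⟨hnW', hzn⟩, hnF⟩
    refine ⟨hnW'.1, hnW'.2.trans_lt (ncard_inter_lt_ncard_inter (hLfin n) ?_
      (hzL n hnW') hzn (hzB n hnW'))⟩
    rintro x ⟨hx, hxL⟩
    by_contra hxi
    exact hnF ⟨x, hxL, hx, hxi⟩
  have hle : τ i₀ + 1 ≤ τ i := le_infOftenLevel (fun n _ => hN i n) hgrow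
  have hmax : τ i ≤ τ i₀ := hi₀ (τ i) (mem_range_self i)
  omega

def heavyAtoms (P : ℕ → Set ℕ) (μ : ℕ → Set ℕ → ℝ) (δ : ℝ) (n : ℕ) : Set ℕ :=
  {k ∈ P n | δ ≤ μ n {k}}

section Fragmented

variable {P : ℕ → Set ℕ} {μ : ℕ → Set ℕ → ℝ}

theorem heavyAtoms_anti {δ δ' : ℝ} (h : δ ≤ δ') (n : ℕ) :
    heavyAtoms P μ δ' n ⊆ heavyAtoms P μ δ n :=
  fun _ hk => ⟨hk.1, h.trans hk.2⟩

theorem pairwise_disjoint_heavyAtoms (hPdisj : ∀ m n, m ≠ n → Disjoint (P m) (P n)) (δ : ℝ) :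
    Pairwise (Disjoint on heavyAtoms P μ δ) :=
  fun m n hmn => (hPdisj m n hmn).mono (sep_subset _ _) (sep_subset _ _)

theorem ncard_inter_heavyAtoms_le (hPfin : ∀ n, (P n).Finite) (hpos : ∀ n A, 0 ≤ μ n A)
    (hadd : ∀ n, ∀ A ⊆ P n, ∀ B ⊆ P n, Disjoint A B → μ n (A ∪ B) = μ n A + μ n B)
    {B : Set ℕ} {M δ : ℝ} (hδ : 0 < δ) (hB : ∀ n, μ n (B ∩ P n) ≤ M) (n : ℕ) :
    (B ∩ heavyAtoms P μ δ n).ncard ≤ ⌊M / δ⌋₊ := by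
  have hsub : B ∩ heavyAtoms P μ δ n ⊆ B ∩ P n := inter_subset_inter_right _ (sep_subset _ _)
  have hsubP := hsub.trans inter_subset_right
  refine Nat.le_floor ((le_div_iff₀ hδ).2 ?_)
  calc _ ≤ μ n (B ∩ heavyAtoms P μ δ n) :=
        ncard_mul_le_measure_of_additive (hadd n) ((hPfin n).subset hsubP) hsubP
          fun _ hk => hk.2.2
    _ ≤ μ n (B ∩ P n) := measure_mono_of_additive (hpos n) (hadd n) inter_subset_right hsub
    _ ≤ M := hB n

theorem setOf_heavyAtoms_subset_mem_fragIdeal {ι : Type*} (hPfin : ∀ n, (P n).Finite)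
    (hPdisj : ∀ m n, m ≠ n → Disjoint (P m) (P n)) (hpos : ∀ n A, 0 ≤ μ n A)
    (hadd : ∀ n, ∀ A ⊆ P n, ∀ B ⊆ P n, Disjoint A B → μ n (A ∪ B) = μ n A + μ n B)
    (B : ι → Set ℕ) (M : ℝ) (hB : ∀ i n, μ n (B i ∩ P n) ≤ M) :
    {k | ∃ n, k ∈ P n ∧ ∃ i, heavyAtoms P μ (μ n {k}) n ⊆ B i} ∈ fragIdeal P μ := by
  refine ⟨max M 0, fun n => ?_⟩
  set D := {k | ∃ n, k ∈ P n ∧ ∃ i, heavyAtoms P μ (μ n {k}) n ⊆ B i}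
  have hD : ∀ k ∈ D ∩ P n, ∃ i, heavyAtoms P μ (μ n {k}) n ⊆ B i := by
    rintro k ⟨⟨m, hkm, hi⟩, hkn⟩
    obtain rfl : m = n := by
      by_contra hmn
      exact disjoint_left.1 (hPdisj m n hmn) hkm hkn
    exact hi
  rcases (D ∩ P n).eq_empty_or_nonempty with hempty | hne
  · rw [hempty, measure_empty_of_additive (hadd n)]
    exact le_max_right _ _
  -- The layer cut at the lightest atom of the trace contains the whole trace.
  obtain ⟨k₀, hk₀, hmin⟩ := exists_min_image _ (fun k => μ n {k})
    ((hPfin n).subset inter_subset_right) hne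
  obtain ⟨i, hi⟩ := hD k₀ hk₀
  have hsub : D ∩ P n ⊆ B i ∩ P n := fun k hk => ⟨hi ⟨hk.2, hmin k hk⟩, hk.2⟩
  calc μ n (D ∩ P n) ≤ μ n (B i ∩ P n) :=
        measure_mono_of_additive (hpos n) (hadd n) inter_subset_right hsub
    _ ≤ max M 0 := (hB i n).trans (le_max_left _ _)

theorem exists_pos_infinite_setOf_heavyAtoms_not_subset {ι : Type*}
    (hPfin : ∀ n, (P n).Finite) (hPdisj : ∀ m n, m ≠ n → Disjoint (P m) (P n))
    (hpos : ∀ n A, 0 ≤ μ n A)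
    (hadd : ∀ n, ∀ A ⊆ P n, ∀ B ⊆ P n, Disjoint A B → μ n (A ∪ B) = μ n A + μ n B)
    (hcond : ∀ X : Set ℕ, Xᶜ ∈ fragIdeal P μ →
      ∃ δ : ℝ, 0 < δ ∧ ∀ m : ℕ, ∃ n ≥ m, ∃ k ∈ P n ∩ X, δ ≤ μ n {k})
    (B : ι → Set ℕ) (M : ℝ) (hB : ∀ i n, μ n (B i ∩ P n) ≤ M) :
    ∃ δ > 0, {n | ∀ i, ¬ heavyAtoms P μ δ n ⊆ B i}.Infinite := by
  obtain ⟨δ, hδ, hfreq⟩ := hcond {k | ∃ n, k ∈ P n ∧ ∃ i, heavyAtoms P μ (μ n {k}) n ⊆ B i}ᶜ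
    (by rw [compl_compl]; exact setOf_heavyAtoms_subset_mem_fragIdeal hPfin hPdisj hpos hadd B M hB)
  refine ⟨δ, hδ, Nat.frequently_atTop_iff_infinite.1 (frequently_atTop.2 fun m => ?_)⟩
  obtain ⟨n, hnm, k, ⟨hkP, hkD⟩, hkδ⟩ := hfreq m
  exact ⟨n, hnm, fun i hi => hkD ⟨n, hkP, i, (heavyAtoms_anti hkδ n).trans hi⟩⟩

end Fragmented

theorem stmt9_general (P : ℕ → Set ℕ)
    (hPfin : ∀ n, (P n).Finite)
    (hPdisj : ∀ m n, m ≠ n → Disjoint (P m) (P n))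
    (μ : ℕ → Set ℕ → ℝ)
    (hpos : ∀ n A, 0 ≤ μ n A)
    (hadd : ∀ n, ∀ A ⊆ P n, ∀ B ⊆ P n, Disjoint A B → μ n (A ∪ B) = μ n A + μ n B)
    (hcond : ∀ X : Set ℕ, Xᶜ ∈ fragIdeal P μ →
      ∃ δ : ℝ, 0 < δ ∧ ∀ m : ℕ, ∃ n ≥ m, ∃ k ∈ P n ∩ X, δ ≤ μ n {k})
    (κ : Cardinal) (hreg : κ.IsRegular) (hunc : Cardinal.aleph0 < κ)
    (A : Ordinal → Set ℕ)
    (hmem : ∀ α < κ.ord, A α ∈ fragIdeal P μ)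
    (hmono : ∀ β α, β ≤ α → α < κ.ord → (A β \ A α).Finite) :
    ∃ Y : Set ℕ, Yᶜ.Infinite ∧ ∀ α < κ.ord, (A α \ Y).Finite := by
  obtain ⟨M, hM⟩ := hreg.exists_nat_cofinal hunc (fun m α => ∀ n, μ n (A α ∩ P n) ≤ m)
    fun α hα => let ⟨M, hM⟩ := hmem α hα; ⟨⌈M⌉₊, fun n => (hM n).trans (Nat.le_ceil M)⟩
  let ι := {α // α < κ.ord ∧ ∀ n, μ n (A α ∩ P n) ≤ M}
  have : Nonempty ι :=
    let ⟨α, _, hα⟩ := hM 0 (ord_pos.2 (aleph0_pos.trans hunc)); ⟨⟨α, hα⟩⟩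
  obtain ⟨δ, hδ, hW⟩ := exists_pos_infinite_setOf_heavyAtoms_not_subset hPfin hPdisj hpos hadd
    hcond (fun i : ι => A i) M fun i => i.2.2
  obtain ⟨i₀, Z, hZ, hZA⟩ := exists_infinite_eventually_finite_inter
    (B := fun i : ι => A i) (fun i j hij => hmono i j hij j.2.1)
    (fun n => (hPfin n).subset (sep_subset _ _))
    (pairwise_disjoint_heavyAtoms hPdisj δ)
    (fun i n => ncard_inter_heavyAtoms_le hPfin hpos hadd hδ i.2.2 n) hW
  refine ⟨Zᶜ, by rwa [compl_compl], fun α hα => ?_⟩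
  obtain ⟨β, hαβ, hβ⟩ := hM (max α i₀) (max_lt hα i₀.2.1)
  refine ((hmono α β ((le_max_left _ _).trans hαβ) hβ.1).union
    (hZA ⟨β, hβ⟩ (show (i₀ : Ordinal) ≤ β from (le_max_right _ _).trans hαβ))).subset ?_
  rintro x ⟨hxA, hxZ⟩
  by_cases hxβ : x ∈ A β
  exacts [Or.inr ⟨notMem_compl_iff.1 hxZ, hxβ⟩, Or.inl ⟨hxA, hxβ⟩]

theorem stmt9 (P : ℕ → Set ℕ)
    (hPfin : ∀ n, (P n).Finite)
    (hPdisj : ∀ m n, m ≠ n → Disjoint (P m) (P n))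
    (hPcov : (⋃ n, P n) = Set.univ)
    (μ : ℕ → Set ℕ → ℝ)
    (hpos : ∀ n A, 0 ≤ μ n A)
    (hadd : ∀ n, ∀ A ⊆ P n, ∀ B ⊆ P n, Disjoint A B → μ n (A ∪ B) = μ n A + μ n B)
    (hsup : ∀ M : ℝ, ∃ n, M < μ n (P n))
    (hcond : ∀ X : Set ℕ, Xᶜ ∈ fragIdeal P μ →
      ∃ δ : ℝ, 0 < δ ∧ ∀ m : ℕ, ∃ n ≥ m, ∃ k ∈ P n ∩ X, δ ≤ μ n {k})
    (κ : Cardinal) (hreg : κ.IsRegular) (hunc : Cardinal.aleph0 < κ)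
    (A : Ordinal → Set ℕ)
    (hmem : ∀ α < κ.ord, A α ∈ fragIdeal P μ)
    (hmono : ∀ β α, β ≤ α → α < κ.ord → (A β \ A α).Finite) :
    ∃ Y : Set ℕ, Yᶜ.Infinite ∧ ∀ α < κ.ord, (A α \ Y).Finite :=
  stmt9_general P hPfin hPdisj μ hpos hadd hcond κ hreg hunc A hmem hmono
end

section
/- Every meager filter on ω admits a tower in its positive sets: if F is a meager filter and (T_α)_{α<κ} is a tower in [ω]^ω, and (P_n) witnesses meagerness of F, then the sets T'_α = ⋃{P_n : n ∈ T_α} form a tower consisting of F-positive sets. -/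
open Set Cardinal

theorem stmt11 (F : Set (Set ℕ))
    (hup : ∀ A ∈ F, ∀ B : Set ℕ, A ⊆ B → B ∈ F)
    (hinter : ∀ A ∈ F, ∀ B ∈ F, A ∩ B ∈ F)
    (hproper : ∅ ∉ F) (huniv : Set.univ ∈ F)
    -- a partition witnessing meagerness of F
    (P : ℕ → Set ℕ) (hPfin : ∀ n, (P n).Finite) (hPne : ∀ n, (P n).Nonempty)
    (hPdisj : ∀ m n, m ≠ n → Disjoint (P m) (P n)) (hPcov : (⋃ n, P n) = Set.univ)
    (hmeager : ∀ A ∈ F, {n | A ∩ P n = ∅}.Finite)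
    -- a tower (T_α)_{α<κ}
    (κ : Cardinal) (T : Ordinal → Set ℕ)
    (hTinf : ∀ α < κ.ord, (T α).Infinite)
    (hTdec : ∀ α β, α ≤ β → β < κ.ord → (T β \ T α).Finite)
    (hTnopi : ¬ ∃ X : Set ℕ, X.Infinite ∧ ∀ α < κ.ord, (X \ T α).Finite) :
    -- the sets T'_α = ⋃{P_n : n ∈ T_α} form a tower of F-positive sets
    (∀ α < κ.ord, ∀ A ∈ F, ((⋃ n ∈ T α, P n) ∩ A).Infinite) ∧
    (∀ α β, α ≤ β → β < κ.ord → ((⋃ n ∈ T β, P n) \ ⋃ n ∈ T α, P n).Finite) ∧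
    ¬ ∃ X : Set ℕ, X.Infinite ∧ ∀ α < κ.ord, (X \ ⋃ n ∈ T α, P n).Finite := by
  classical
  -- key lemma: picking a point of A ∩ P n for each n in an infinite S gives an infinite set
  have key : ∀ (A S : Set ℕ), S.Infinite → (∀ n ∈ S, (A ∩ P n).Nonempty) →
      Set.Infinite {x | ∃ n ∈ S, x ∈ A ∩ P n} := by
    intro A S hS hne
    set f : ℕ → ℕ := fun n => if h : (A ∩ P n).Nonempty then h.some else 0 with hf
    have hmem : ∀ n ∈ S, f n ∈ A ∩ P n := by
      intro n hn
      simp only [hf, dif_pos (hne n hn)]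
      exact (hne n hn).some_mem
    refine Set.infinite_of_injOn_mapsTo (f := f) ?_ ?_ hS
    · intro m hm n hn heq
      by_contra hmn
      have h1 := (hmem m hm).2
      have h2 := (hmem n hn).2
      rw [heq] at h1
      exact Set.disjoint_left.mp (hPdisj m n hmn) h1 h2
    · intro n hn
      exact ⟨n, hn, hmem n hn⟩
  refine ⟨?_, ?_, ?_⟩
  · intro α hα A hA
    have hS : (T α \ {n | A ∩ P n = ∅}).Infinite :=
      (hTinf α hα).diff (hmeager A hA)
    have hne : ∀ n ∈ T α \ {n | A ∩ P n = ∅}, (A ∩ P n).Nonempty := by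
      intro n hn
      exact Set.nonempty_iff_ne_empty.mpr hn.2
    refine (key A _ hS hne).mono ?_
    rintro x ⟨n, hn, hxA, hxP⟩
    exact ⟨Set.mem_biUnion hn.1 hxP, hxA⟩
  · intro α β hle hβ
    have hsub : ((⋃ n ∈ T β, P n) \ ⋃ n ∈ T α, P n) ⊆ ⋃ n ∈ T β \ T α, P n := by
      rintro x ⟨hx1, hx2⟩
      obtain ⟨n, hn, hxP⟩ := Set.mem_iUnion₂.mp hx1
      refine Set.mem_biUnion ⟨hn, fun hnα => hx2 (Set.mem_biUnion hnα hxP)⟩ hxP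
    exact ((hTdec α β hle hβ).biUnion (fun n _ => hPfin n)).subset hsub
  · rintro ⟨X, hXinf, hX⟩
    set Y : Set ℕ := {n | (X ∩ P n).Nonempty} with hY
    have hYinf : Y.Infinite := by
      intro hYfin
      have hXsub : X ⊆ ⋃ n ∈ Y, P n := by
        intro x hx
        have : x ∈ ⋃ n, P n := hPcov ▸ Set.mem_univ x
        obtain ⟨n, hn⟩ := Set.mem_iUnion.mp this
        exact Set.mem_biUnion ⟨x, hx, hn⟩ hn
      exact hXinf ((hYfin.biUnion (fun n _ => hPfin n)).subset hXsub)
    refine hTnopi ⟨Y, hYinf, fun α hα => ?_⟩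
    by_contra hfin
    have hinf : (Y \ T α).Infinite := hfin
    have hne : ∀ n ∈ Y \ T α, (X ∩ P n).Nonempty := fun n hn => hn.1
    have := key X (Y \ T α) hinf hne
    refine (this.mono ?_) (hX α hα)
    rintro x ⟨n, hn, hxX, hxP⟩
    refine ⟨hxX, fun hmem => ?_⟩
    obtain ⟨m, hm, hxm⟩ := Set.mem_iUnion₂.mp hmem
    rcases eq_or_ne m n with rfl | hmn
    · exact hn.2 hm
    · exact Set.disjoint_left.mp (hPdisj m n hmn) hxm hxP
end

section
/- For every non-meager filter F on ω, non*(F) ≥ 𝔟. -/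
open Set Cardinal

/-- The unbounding number 𝔟: least size of a ≤*-unbounded family in ω^ω. -/
noncomputable def bNumber : Cardinal :=
  sInf {c | ∃ U : Set (ℕ → ℕ), Cardinal.mk U = c ∧
    ∀ g : ℕ → ℕ, ∃ f ∈ U, {n | g n < f n}.Infinite}

/-- non*(F) for a filter F: least size of a family of infinite sets such that every
member of F almost contains some member of the family. -/
noncomputable def nonStarFilter (F : Set (Set ℕ)) : Cardinal :=
  sInf {c | ∃ 𝒳 : Set (Set ℕ), (∀ X ∈ 𝒳, X.Infinite) ∧ Cardinal.mk 𝒳 = c ∧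
    ∀ A ∈ F, ∃ X ∈ 𝒳, (X \ A).Finite}

/-!
Take a witness family `𝒳` for non*(F) of minimal size. If `|𝒳| < 𝔟`, the next-element functions
`n ↦ min (X ∩ [n, ∞))`, `X ∈ 𝒳`, are all dominated by a single `g`. Cut `ω` into intervals
`[a k, a (k + 1))` with `g (a k) < a (k + 1)`. Every `A ∈ F` almost contains some `X ∈ 𝒳`, and
then for almost every `k` the next element of `X` after `a k` lies in `A ∩ [a k, a (k + 1))`.
So this interval partition witnesses that `F` is meager.
-/

open Filter

lemma exists_bound_of_mk_lt_bNumber {U : Set (ℕ → ℕ)} (hU : #U < bNumber) :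
    ∃ g : ℕ → ℕ, ∀ f ∈ U, {n | g n < f n}.Finite := by
  by_contra! h
  exact hU.not_ge (csInf_le' ⟨U, rfl, h⟩)

lemma exists_family_mk_eq_nonStarFilter {F : Set (Set ℕ)} (hF : ∀ A ∈ F, A.Infinite) :
    ∃ 𝒳 : Set (Set ℕ), (∀ X ∈ 𝒳, X.Infinite) ∧ #𝒳 = nonStarFilter F ∧
      ∀ A ∈ F, ∃ X ∈ 𝒳, (X \ A).Finite :=
  csInf_mem (s := {c | ∃ 𝒳 : Set (Set ℕ), (∀ X ∈ 𝒳, X.Infinite) ∧ #𝒳 = c ∧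
    ∀ A ∈ F, ∃ X ∈ 𝒳, (X \ A).Finite})
    ⟨#F, F, hF, rfl, fun A hA => ⟨A, hA, by simp⟩⟩

noncomputable def nextElem (X : Set ℕ) (n : ℕ) : ℕ := sInf (X ∩ Ici n)

lemma nextElem_mem_inter {X : Set ℕ} (hX : X.Infinite) (n : ℕ) : nextElem X n ∈ X ∩ Ici n :=
  let ⟨x, hx, hnx⟩ := hX.exists_gt n
  Nat.sInf_mem ⟨x, hx, hnx.le⟩

lemma tendsto_nextElem {X : Set ℕ} (hX : X.Infinite) : Tendsto (nextElem X) atTop atTop :=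
  tendsto_atTop_mono (fun n => (nextElem_mem_inter hX n).2) tendsto_id

def blockEnds (g : ℕ → ℕ) : ℕ → ℕ
  | 0 => 0
  | k + 1 => max (blockEnds g k) (g (blockEnds g k)) + 1

lemma blockEnds_lt_succ (g : ℕ → ℕ) (k : ℕ) : blockEnds g k < blockEnds g (k + 1) :=
  Nat.lt_succ_of_le (le_max_left _ _)

lemma apply_blockEnds_lt_succ (g : ℕ → ℕ) (k : ℕ) : g (blockEnds g k) < blockEnds g (k + 1) :=
  Nat.lt_succ_of_le (le_max_right _ _)

lemma blockEnds_strictMono (g : ℕ → ℕ) : StrictMono (blockEnds g) :=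
  strictMono_nat_of_lt_succ (blockEnds_lt_succ g)

lemma iUnion_Ico_eq_univ_of_strictMono {a : ℕ → ℕ} (ha : StrictMono a) (h0 : a 0 = 0) :
    ⋃ k, Ico (a k) (a (k + 1)) = Set.univ := by
  simpa [h0] using iUnion_Ico_map_succ_eq_Ici (fun k => ha.monotone (Nat.zero_le k))
    ha.not_bddAbove_range_of_wellFoundedLT

/-- For almost every `k`, the block starting at `n = blockEnds g k` contains `nextElem X n`,
which lies in `A`. -/
lemma finite_setOf_inter_Ico_blockEnds_eq_empty {A X : Set ℕ} {g : ℕ → ℕ} (hX : X.Infinite)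
    (hXA : (X \ A).Finite) (hg : {n | g n < nextElem X n}.Finite) :
    {k | A ∩ Ico (blockEnds g k) (blockEnds g (k + 1)) = ∅}.Finite := by
  have hmemA : ∀ᶠ n in atTop, nextElem X n ∈ A := by
    filter_upwards [(tendsto_nextElem hX).eventually
      (Nat.cofinite_eq_atTop ▸ hXA.compl_mem_cofinite)] with n hn
    by_contra hnA
    exact hn ⟨(nextElem_mem_inter hX n).1, hnA⟩
  have hle : ∀ᶠ n in atTop, nextElem X n ≤ g n := by
    rw [← Nat.cofinite_eq_atTop, eventually_cofinite]
    simpa only [not_le] using hg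
  have hblocks : ∀ᶠ k in atTop, (A ∩ Ico (blockEnds g k) (blockEnds g (k + 1))).Nonempty := by
    filter_upwards [(blockEnds_strictMono g).tendsto_atTop.eventually (hmemA.and hle)]
      with k ⟨hA, hg⟩
    exact ⟨_, hA, (nextElem_mem_inter hX _).2, hg.trans_lt (apply_blockEnds_lt_succ g k)⟩
  rw [← Nat.cofinite_eq_atTop, eventually_cofinite] at hblocks
  simpa only [not_nonempty_iff_eq_empty] using hblocks

theorem stmt12_general (F : Set (Set ℕ))
    (hfree : ∀ A ∈ F, A.Infinite)
    (hnonmeager : ¬ ∃ P : ℕ → Set ℕ, (∀ n, (P n).Finite) ∧ (∀ n, (P n).Nonempty) ∧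
      (∀ m n, m ≠ n → Disjoint (P m) (P n)) ∧ (⋃ n, P n) = Set.univ ∧
      ∀ A ∈ F, {n | A ∩ P n = ∅}.Finite) :
    bNumber ≤ nonStarFilter F := by
  obtain ⟨𝒳, h𝒳inf, h𝒳card, h𝒳cov⟩ := exists_family_mk_eq_nonStarFilter hfree
  by_contra! hlt
  obtain ⟨g, hg⟩ := exists_bound_of_mk_lt_bNumber
    (mk_image_le.trans_lt (h𝒳card ▸ hlt : #𝒳 < bNumber) : #(nextElem '' 𝒳) < bNumber)
  set a := blockEnds g
  refine hnonmeager ⟨fun k => Ico (a k) (a (k + 1)), fun k => finite_Ico _ _,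
    fun k => nonempty_Ico.2 (blockEnds_lt_succ g k),
    fun m n hmn => (blockEnds_strictMono g).monotone.pairwise_disjoint_on_Ico_succ hmn,
    iUnion_Ico_eq_univ_of_strictMono (blockEnds_strictMono g) rfl, fun A hA => ?_⟩
  obtain ⟨X, hX, hXA⟩ := h𝒳cov A hA
  exact finite_setOf_inter_Ico_blockEnds_eq_empty (h𝒳inf X hX) hXA (hg _ (mem_image_of_mem _ hX))

theorem stmt12 (F : Set (Set ℕ))
    (hup : ∀ A ∈ F, ∀ B : Set ℕ, A ⊆ B → B ∈ F)
    (hinter : ∀ A ∈ F, ∀ B ∈ F, A ∩ B ∈ F)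
    (huniv : Set.univ ∈ F)
    (hfree : ∀ A ∈ F, A.Infinite)
    (hcofin : ∀ A : Set ℕ, Aᶜ.Finite → A ∈ F)
    (hnonmeager : ¬ ∃ P : ℕ → Set ℕ, (∀ n, (P n).Finite) ∧ (∀ n, (P n).Nonempty) ∧
      (∀ m n, m ≠ n → Disjoint (P m) (P n)) ∧ (⋃ n, P n) = Set.univ ∧
      ∀ A ∈ F, {n | A ∩ P n = ∅}.Finite) :
    bNumber ≤ nonStarFilter F :=
  stmt12_general F hfree hnonmeager
end

section
/- If I ≤_KB J via a finite-to-one function and there is a J-Luzin family of size κ ≥ ω₁, then there is an I-Luzin family of size κ. -/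
open Set Cardinal

/-- A finite-to-one map sends infinite sets to infinite sets. -/
lemma img_inf {f : ℕ → ℕ} (hf : ∀ n : ℕ, (f ⁻¹' {n}).Finite) {X : Set ℕ}
    (hX : X.Infinite) : (f '' X).Infinite := by
  intro hfin
  have h1 : (f ⁻¹' (f '' X)).Finite := hfin.preimage' (fun b _ => hf b)
  exact hX (h1.subset (subset_preimage_image f X))

lemma inter_pre_inf {f : ℕ → ℕ} {X A : Set ℕ}
    (h : ((f '' X) ∩ A).Infinite) : (X ∩ f ⁻¹' A).Infinite := by
  have hsub : (f '' X) ∩ A ⊆ f '' (X ∩ f ⁻¹' A) := by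
    rintro b ⟨⟨x, hxX, rfl⟩, hbA⟩
    exact ⟨x, ⟨hxX, hbA⟩, rfl⟩
  exact Set.Infinite.of_image f (h.mono hsub)

theorem stmt14 (I J : Set (Set ℕ))
    (hI : IsIdealOmega I) (hItall : IsTall I)
    (hJ : IsIdealOmega J) (hJtall : IsTall J)
    (f : ℕ → ℕ) (hf : ∀ n : ℕ, (f ⁻¹' {n}).Finite)
    (hred : ∀ A ∈ I, f ⁻¹' A ∈ J)
    (κ : Cardinal) (hκ : Cardinal.aleph 1 ≤ κ)
    (𝒳 : Set (Set ℕ)) (h𝒳inf : ∀ X ∈ 𝒳, X.Infinite)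
    (h𝒳card : Cardinal.mk 𝒳 = κ)
    (h𝒳Luzin : ∀ A ∈ J, {X ∈ 𝒳 | (X ∩ A).Infinite}.Countable) :
    ∃ 𝒴 : Set (Set ℕ), (∀ Y ∈ 𝒴, Y.Infinite) ∧ Cardinal.mk 𝒴 = κ ∧
      ∀ A ∈ I, {Y ∈ 𝒴 | (Y ∩ A).Infinite}.Countable := by
  set 𝒴 : Set (Set ℕ) := (fun X => f '' X) '' 𝒳 with h𝒴def
  -- each member of 𝒴 is infinite
  have hYinf : ∀ Y ∈ 𝒴, Y.Infinite := by
    rintro Y ⟨X, hX, rfl⟩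
    exact img_inf hf (h𝒳inf X hX)
  -- fibers are countable
  have hfiber : ∀ B ∈ 𝒴, {X ∈ 𝒳 | f '' X = B}.Countable := by
    rintro B hB
    have hBinf : B.Infinite := hYinf B hB
    obtain ⟨A, hAI, hAB, hAinf⟩ := hItall B hBinf
    have hpre : f ⁻¹' A ∈ J := hred A hAI
    have hcount := h𝒳Luzin (f ⁻¹' A) hpre
    refine hcount.mono ?_
    rintro X ⟨hX𝒳, hXB⟩
    refine ⟨hX𝒳, inter_pre_inf ?_⟩
    have : (f '' X) ∩ A = A := by
      rw [hXB]; exact inter_eq_self_of_subset_right hAB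
    rw [this]; exact hAinf
  -- cardinality
  have hle : Cardinal.mk 𝒴 ≤ κ := h𝒳card ▸ Cardinal.mk_image_le
  have hcover : 𝒳 ⊆ ⋃ B ∈ 𝒴, {X ∈ 𝒳 | f '' X = B} := by
    intro X hX
    exact mem_biUnion (mem_image_of_mem _ hX) ⟨hX, rfl⟩
  have hκω : Cardinal.aleph0 < κ := lt_of_lt_of_le (by
      simpa using Cardinal.aleph_lt_aleph.mpr (zero_lt_one)) hκ
  have hge : κ ≤ Cardinal.mk 𝒴 := by
    by_contra hlt
    push_neg at hlt
    have h1 : Cardinal.mk 𝒳 ≤ Cardinal.mk (⋃ B ∈ 𝒴, {X ∈ 𝒳 | f '' X = B}) :=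
      Cardinal.mk_le_mk_of_subset hcover
    have h2 : Cardinal.mk (⋃ B ∈ 𝒴, {X ∈ 𝒳 | f '' X = B}) ≤
        Cardinal.mk 𝒴 * ⨆ B : 𝒴, Cardinal.mk {X ∈ 𝒳 | f '' X = (B : Set ℕ)} :=
      Cardinal.mk_biUnion_le _ _
    have h3 : (⨆ B : 𝒴, Cardinal.mk {X ∈ 𝒳 | f '' X = (B : Set ℕ)}) ≤ Cardinal.aleph0 := by
      apply ciSup_le'
      intro B
      exact (hfiber B B.2).le_aleph0
    have h4 : Cardinal.mk 𝒳 ≤ Cardinal.mk 𝒴 * Cardinal.aleph0 :=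
      h1.trans (h2.trans (mul_le_mul_right h3 _))
    have h5 : Cardinal.mk 𝒴 * Cardinal.aleph0 ≤ κ * Cardinal.aleph0 :=
      mul_le_mul_left hle _
    have h6 : Cardinal.mk 𝒴 * Cardinal.aleph0 < κ := by
      rcases le_or_gt (Cardinal.mk 𝒴) Cardinal.aleph0 with h | h
      · calc Cardinal.mk 𝒴 * Cardinal.aleph0 ≤ Cardinal.aleph0 * Cardinal.aleph0 :=
              mul_le_mul_left h _
          _ = Cardinal.aleph0 := Cardinal.aleph0_mul_aleph0
          _ < κ := hκω
      · have heq : Cardinal.mk 𝒴 * Cardinal.aleph0 = Cardinal.mk 𝒴 :=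
          Cardinal.mul_eq_left h.le h.le Cardinal.aleph0_ne_zero
        rw [heq]; exact hlt
    exact absurd (h𝒳card ▸ h4) (not_le_of_gt h6)
  -- Luzin property
  refine ⟨𝒴, hYinf, le_antisymm hle hge, ?_⟩
  intro A hAI
  have hcount := h𝒳Luzin (f ⁻¹' A) (hred A hAI)
  have : {Y ∈ 𝒴 | (Y ∩ A).Infinite} ⊆ (fun X => f '' X) '' {X ∈ 𝒳 | (X ∩ f ⁻¹' A).Infinite} := by
    rintro Y ⟨⟨X, hX, rfl⟩, hYA⟩
    exact ⟨X, ⟨hX, inter_pre_inf hYA⟩, rfl⟩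
  exact (hcount.image _).mono this
end

section
/- If I ≤_KB J and [ω]^ω is J-inaccessible, then [ω]^ω is I-inaccessible. Equivalently: if there is a ⊆-increasing sequence (B_α)_{α<κ} of subsets of [ω]^ω covering [ω]^ω with each B_α ⊆ Â_α for some A_α ∈ I (where Â = {X ∈ [ω]^ω : |X ∩ A| = ω}), then there is such a covering for J. -/
/-!
If `f` witnesses `I ≤_KB J` and `(B_α)` witnesses that `[ω]^ω` is `I`-accessible, then
`C_α = {X infinite : f[X] ∈ B_α}` witnesses that it is `J`-accessible: `f[X]` is infinite for
infinite `X` because `f` is finite-to-one, and if `f[X] ∩ A` is infinite then so is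
`X ∩ f⁻¹[A]`, with `f⁻¹[A] ∈ J`. The only subtlety is that the new sequence must be indexed by
ordinals of another universe; its range is a small set, so it can be re-enumerated there.
-/

open Set Cardinal

universe u v w

theorem Set.Infinite.image_of_finite_fibers {α β : Type*} {f : α → β}
    (hf : ∀ b, (f ⁻¹' {b}).Finite) {X : Set α} (hX : X.Infinite) : (f '' X).Infinite :=
  fun hfin => hX ((hfin.preimage' fun b _ => hf b).subset (subset_preimage_image f X))

/-- The range of `B` is well-ordered by a choice of index for each value, and the order type of
that well-order, being small, exists in every universe. -/
theorem Ordinal.exists_monotoneOn_iio_image_eq {β : Type w} [Preorder β] {o : Ordinal.{u}}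
    {B : Ordinal.{u} → β} (hB : MonotoneOn B (Iio o)) :
    ∃ (o' : Ordinal.{max w v}) (B' : Ordinal.{max w v} → β),
      MonotoneOn B' (Iio o') ∧ B' '' Iio o' = B '' Iio o := by
  let R := ULift.{v} (B '' Iio o)
  choose idx hidx_lt hidx_eq using fun S : R => S.down.2
  have hinj : Function.Injective idx := fun S T h =>
    ULift.ext _ _ (Subtype.ext (by rw [← hidx_eq, h, hidx_eq]))
  let r : R → R → Prop := Function.onFun (· < ·) idx
  have : IsWellOrder R r := hinj.isWellOrder _
  let e : Ordinal.{max w v} → β := fun a =>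
    if h : a < type r then ((enum r ⟨a, h⟩).down : β) else B 0
  have he : ∀ a (h : a < type r), e a = B (idx (enum r ⟨a, h⟩)) := fun a h => by
    simp only [e, dif_pos h, hidx_eq]
  refine ⟨type r, e, fun a ha b hb hab => ?_, ?_⟩
  · rw [he a ha, he b hb]
    refine hB (hidx_lt _) (hidx_lt _) (not_lt.mp ?_)
    exact (enum_le_enum r (o₁ := ⟨b, hb⟩) (o₂ := ⟨a, ha⟩)).mpr hab
  · apply Subset.antisymm
    · rintro _ ⟨a, ha, rfl⟩
      rw [he a ha]
      exact mem_image_of_mem B (hidx_lt _)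
    · rintro _ ⟨b, hb, rfl⟩
      let S : R := ⟨⟨B b, mem_image_of_mem B hb⟩⟩
      refine ⟨typein r S, typein_lt_type r S, ?_⟩
      rw [he _ (typein_lt_type r S), enum_typein, hidx_eq]

/-- The paper's `Â`. -/
def hat (A : Set ℕ) : Set (Set ℕ) := {X | X.Infinite ∧ (X ∩ A).Infinite}

/-- A witness, of length `o`, that `[ω]^ω` is `I`-accessible. -/
def IsIncreasingHatCover (I : Set (Set ℕ)) (o : Ordinal.{u}) (B : Ordinal.{u} → Set (Set ℕ)) :
    Prop :=
  (∀ α < o, ∃ A ∈ I, B α ⊆ hat A) ∧ MonotoneOn B (Iio o) ∧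
    ∀ X : Set ℕ, X.Infinite → ∃ α < o, X ∈ B α

namespace IsIncreasingHatCover

variable {I J : Set (Set ℕ)} {o : Ordinal.{u}} {B : Ordinal.{u} → Set (Set ℕ)}

theorem comap {f : ℕ → ℕ} (hf : ∀ n, (f ⁻¹' {n}).Finite) (hred : ∀ A ∈ I, f ⁻¹' A ∈ J)
    (h : IsIncreasingHatCover I o B) :
    IsIncreasingHatCover J o fun α => {X | X.Infinite ∧ f '' X ∈ B α} := by
  obtain ⟨hsub, hmono, hcov⟩ := h
  refine ⟨fun α hα => ?_, fun β hβ α hα hle X hX => ⟨hX.1, hmono hβ hα hle hX.2⟩,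
    fun X hX => ?_⟩
  · obtain ⟨A, hA, hBA⟩ := hsub α hα
    refine ⟨f ⁻¹' A, hred A hA, fun X hX => ⟨hX.1, ?_⟩⟩
    have : (f '' X ∩ A).Infinite := (hBA hX.2).2
    rw [← image_inter_preimage] at this
    exact this.of_image f
  · obtain ⟨α, hα, hXα⟩ := hcov (f '' X) (hX.image_of_finite_fibers hf)
    exact ⟨α, hα, hX, hXα⟩

theorem reindex (h : IsIncreasingHatCover I o B) :
    ∃ (o' : Ordinal.{v}) (B' : Ordinal.{v} → Set (Set ℕ)), IsIncreasingHatCover I o' B' := by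
  obtain ⟨o', B', hmono', himage⟩ : ∃ (o' : Ordinal.{v}) (B' : Ordinal.{v} → Set (Set ℕ)),
      MonotoneOn B' (Iio o') ∧ B' '' Iio o' = B '' Iio o :=
    Ordinal.exists_monotoneOn_iio_image_eq h.2.1
  refine ⟨o', B', fun a ha => ?_, hmono', fun X hX => ?_⟩
  · obtain ⟨b, hb, hBb⟩ : B' a ∈ B '' Iio o := himage ▸ mem_image_of_mem B' ha
    exact hBb ▸ h.1 b hb
  · obtain ⟨b, hb, hXb⟩ := h.2.2 X hX
    obtain ⟨a, ha, hab⟩ : B b ∈ B' '' Iio o' := himage ▸ mem_image_of_mem B hb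
    exact ⟨a, ha, hab ▸ hXb⟩

end IsIncreasingHatCover

theorem stmt15_general (I J : Set (Set ℕ))
    (f : ℕ → ℕ) (hf : ∀ n : ℕ, (f ⁻¹' {n}).Finite)
    (hred : ∀ A ∈ I, f ⁻¹' A ∈ J)
    -- an increasing covering of [ω]^ω witnessing I-accessibility
    (o : Ordinal) (B : Ordinal → Set (Set ℕ)) (A : Ordinal → Set ℕ)
    (hA : ∀ α < o, A α ∈ I)
    (hmono : ∀ β α, β ≤ α → α < o → B β ⊆ B α)
    (hBsub : ∀ α < o, B α ⊆ {X : Set ℕ | X.Infinite ∧ (X ∩ A α).Infinite})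
    (hcov : ∀ X : Set ℕ, X.Infinite → ∃ α < o, X ∈ B α) :
    -- then there is such a covering for J
    ∃ (o' : Ordinal) (C : Ordinal → Set (Set ℕ)) (D : Ordinal → Set ℕ),
      (∀ α < o', D α ∈ J) ∧
      (∀ β α, β ≤ α → α < o' → C β ⊆ C α) ∧
      (∀ α < o', C α ⊆ {X : Set ℕ | X.Infinite ∧ (X ∩ D α).Infinite}) ∧
      (∀ X : Set ℕ, X.Infinite → ∃ α < o', X ∈ C α) := by
  have hIcover : IsIncreasingHatCover I o B :=
    ⟨fun α hα => ⟨A α, hA α hα, hBsub α hα⟩, fun β _ α hα hle => hmono β α hle hα, hcov⟩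
  obtain ⟨o', C, hCJ, hCmono, hCcov⟩ := (hIcover.comap hf hred).reindex
  choose! D hDJ hCD using hCJ
  exact ⟨o', C, D, hDJ, fun β α hle hα => hCmono (hle.trans_lt hα) hα hle, hCD, hCcov⟩

theorem stmt15 (I J : Set (Set ℕ))
    (hI : IsIdealOmega I) (hItall : IsTall I)
    (hJ : IsIdealOmega J) (hJtall : IsTall J)
    (f : ℕ → ℕ) (hf : ∀ n : ℕ, (f ⁻¹' {n}).Finite)
    (hred : ∀ A ∈ I, f ⁻¹' A ∈ J)
    -- an increasing covering of [ω]^ω witnessing I-accessibility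
    (o : Ordinal) (B : Ordinal → Set (Set ℕ)) (A : Ordinal → Set ℕ)
    (hA : ∀ α < o, A α ∈ I)
    (hmono : ∀ β α, β ≤ α → α < o → B β ⊆ B α)
    (hBsub : ∀ α < o, B α ⊆ {X : Set ℕ | X.Infinite ∧ (X ∩ A α).Infinite})
    (hcov : ∀ X : Set ℕ, X.Infinite → ∃ α < o, X ∈ B α) :
    -- then there is such a covering for J
    ∃ (o' : Ordinal) (C : Ordinal → Set (Set ℕ)) (D : Ordinal → Set ℕ),
      (∀ α < o', D α ∈ J) ∧
      (∀ β α, β ≤ α → α < o' → C β ⊆ C α) ∧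
      (∀ α < o', C α ⊆ {X : Set ℕ | X.Infinite ∧ (X ∩ D α).Infinite}) ∧
      (∀ X : Set ℕ, X.Infinite → ∃ α < o', X ∈ C α) :=
  stmt15_general I J f hf hred o B A hA hmono hBsub hcov
end

section
/- There is a Fin⊗Fin-Luzin family if and only if 𝔡 = ω₁. -/
open Set Cardinal Filter

/-- The dominating number 𝔡. -/
noncomputable def dNumber : Cardinal :=
  sInf {c | ∃ D : Set (ℕ → ℕ), Cardinal.mk D = c ∧
    ∀ f : ℕ → ℕ, ∃ g ∈ D, ∀ᶠ n in Filter.atTop, f n ≤ g n}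

/-- The ideal Fin⊗Fin on ω×ω. -/
def FinOtimesFin : Set (Set (ℕ × ℕ)) :=
  {A | {n : ℕ | {m : ℕ | (n, m) ∈ A}.Infinite}.Finite}

lemma unbounded_fst_infinite {S : Set (ℕ × ℕ)} (h : ∀ N, ∃ p ∈ S, N ≤ p.1) : S.Infinite := by
  intro hfin
  obtain ⟨b, hb⟩ := (hfin.image Prod.fst).bddAbove
  obtain ⟨p, hp, hNp⟩ := h (b + 1)
  exact absurd (hb ⟨p, hp, rfl⟩) (by omega)

lemma dominate_countable {S : Set (ℕ → ℕ)} (hS : S.Countable) (h : ℕ → ℕ) :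
    ∃ g : ℕ → ℕ, (∀ n, h n ≤ g n) ∧ ∀ s ∈ S, ∀ᶠ n in atTop, s n < g n := by
  rcases S.eq_empty_or_nonempty with rfl | hne
  · exact ⟨h, fun n => le_rfl, fun s hs => absurd hs (Set.notMem_empty s)⟩
  · obtain ⟨e, rfl⟩ := hS.exists_eq_range hne
    refine ⟨fun n => (Finset.range (n + 1)).sup (fun i => e i n) + h n + 1,
      fun n => by dsimp only; omega, ?_⟩
    rintro s ⟨i, rfl⟩
    filter_upwards [eventually_ge_atTop i] with n hn
    have : e i n ≤ (Finset.range (n + 1)).sup (fun i => e i n) :=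
      Finset.le_sup (f := fun i => e i n) (Finset.mem_range.2 (by omega))
    omega

lemma domSet_nonempty : {c | ∃ D : Set (ℕ → ℕ), Cardinal.mk D = c ∧
    ∀ f : ℕ → ℕ, ∃ g ∈ D, ∀ᶠ n in Filter.atTop, f n ≤ g n}.Nonempty :=
  ⟨_, Set.univ, rfl, fun f => ⟨f, trivial, Eventually.of_forall fun _ => le_rfl⟩⟩

lemma aleph1_le_dNumber : Cardinal.aleph 1 ≤ dNumber := by
  refine le_csInf domSet_nonempty ?_
  rintro c ⟨D, rfl, hdom⟩
  by_contra hlt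
  push_neg at hlt
  have hc : D.Countable := (countable_iff_lt_aleph_one D).2 hlt
  obtain ⟨g, -, hg⟩ := dominate_countable hc 0
  obtain ⟨s, hsD, hs⟩ := hdom g
  obtain ⟨n, h1, h2⟩ := (hs.and (hg s hsD)).exists
  omega

lemma key_exists_col {X : Set (ℕ × ℕ)} (hX : X.Infinite)
    (hcol : ∀ n, (X ∩ {p | p.1 = n}).Finite) (n : ℕ) :
    {k | n ≤ k ∧ ∃ m, (k, m) ∈ X}.Nonempty := by
  by_contra hne
  rw [Set.not_nonempty_iff_eq_empty, Set.eq_empty_iff_forall_notMem] at hne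
  refine hX ?_
  have : X ⊆ ⋃ k ∈ Finset.range n, (X ∩ {p | p.1 = k}) := by
    rintro ⟨a, b⟩ hp
    have ha : a < n := by
      by_contra h'
      exact hne a ⟨by omega, b, hp⟩
    exact Set.mem_biUnion (Finset.mem_range.2 ha) ⟨hp, rfl⟩
  exact Set.Finite.subset (Set.Finite.biUnion (Finset.range n).finite_toSet
    fun k _ => hcol k) this

noncomputable def kfun (X : Set (ℕ × ℕ)) (n : ℕ) : ℕ := sInf {k | n ≤ k ∧ ∃ m, (k, m) ∈ X}

noncomputable def gfun (X : Set (ℕ × ℕ)) (n : ℕ) : ℕ := sInf {m | (kfun X n, m) ∈ X}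

lemma key_dom {X : Set (ℕ × ℕ)} (hX : X.Infinite)
    (hcol : ∀ n, (X ∩ {p | p.1 = n}).Finite) {f : ℕ → ℕ} (hf : Monotone f)
    (hfin : ¬(X ∩ {p | p.2 ≤ f p.1}).Infinite) : ∀ᶠ n in atTop, f n < gfun X n := by
  by_contra hev
  refine hfin (unbounded_fst_infinite fun N => ?_)
  rw [Filter.not_eventually] at hev
  obtain ⟨n, hnN, hfg⟩ := (frequently_atTop.1 hev) N
  push_neg at hfg
  obtain ⟨hnk, m, hm⟩ := Nat.sInf_mem (key_exists_col hX hcol n)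
  have hgm : (kfun X n, gfun X n) ∈ X :=
    Nat.sInf_mem (s := {m | (kfun X n, m) ∈ X}) ⟨m, hm⟩
  exact ⟨(kfun X n, gfun X n), ⟨hgm, le_trans hfg (hf hnk)⟩, le_trans hnN hnk⟩

lemma column_mem_ideal (n : ℕ) : {p : ℕ × ℕ | p.1 = n} ∈ FinOtimesFin := by
  refine Set.Finite.subset (Set.finite_singleton n) ?_
  intro k hk
  simp only [Set.mem_setOf_eq] at hk
  rcases eq_or_ne k n with rfl | hkn
  · exact rfl
  · exfalso
    refine hk (Set.finite_empty.subset ?_)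
    intro m hm
    exact hkn hm

lemma forward {𝒳 : Set (Set (ℕ × ℕ))} (h1 : ¬𝒳.Countable) (h2 : ∀ X ∈ 𝒳, X.Infinite)
    (h3 : ∀ A ∈ FinOtimesFin, {X ∈ 𝒳 | (X ∩ A).Infinite}.Countable) :
    dNumber ≤ Cardinal.aleph 1 := by
  classical
  set Bad : Set (Set (ℕ × ℕ)) := ⋃ n, {X ∈ 𝒳 | (X ∩ {p | p.1 = n}).Infinite} with hBad
  have hBadC : Bad.Countable := Set.countable_iUnion fun n => h3 _ (column_mem_ideal n)
  set 𝒳₀ := 𝒳 \ Bad with h𝒳₀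
  have h𝒳₀unc : ¬𝒳₀.Countable := by
    intro hc
    refine h1 ((hc.union hBadC).mono fun X hX => ?_)
    by_cases hb : X ∈ Bad
    · exact Or.inr hb
    · exact Or.inl ⟨hX, hb⟩
  have h𝒳₀col : ∀ X ∈ 𝒳₀, ∀ n, (X ∩ {p | p.1 = n}).Finite := by
    rintro X ⟨hX𝒳, hXb⟩ n
    rw [← Set.not_infinite]
    intro hinf
    exact hXb (Set.mem_iUnion.2 ⟨n, hX𝒳, hinf⟩)
  have hle : Cardinal.aleph 1 ≤ Cardinal.mk 𝒳₀ := by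
    rw [← not_lt]
    intro hlt
    exact h𝒳₀unc ((countable_iff_lt_aleph_one _).2 hlt)
  obtain ⟨𝒴, h𝒴sub, h𝒴mk⟩ := Cardinal.le_mk_iff_exists_subset.1 hle
  have h𝒴unc : ¬𝒴.Countable := by
    intro hc
    exact absurd (h𝒴mk ▸ (countable_iff_lt_aleph_one 𝒴).1 hc) (lt_irrefl _)
  have hdom : ∀ h : ℕ → ℕ, ∃ g ∈ gfun '' 𝒴, ∀ᶠ n in Filter.atTop, h n ≤ g n := by
    intro h
    set f : ℕ → ℕ := fun n => (Finset.range (n + 1)).sup h with hf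
    have hfmono : Monotone f := fun a b hab =>
      Finset.sup_mono (Finset.range_subset_range.2 (by omega))
    have hhf : ∀ n, h n ≤ f n := fun n =>
      Finset.le_sup (Finset.mem_range.2 n.lt_succ_self)
    have hAf : {p : ℕ × ℕ | p.2 ≤ f p.1} ∈ FinOtimesFin := by
      refine Set.finite_empty.subset ?_
      intro n hn
      exact hn (Set.finite_Iic (f n))
    obtain ⟨X, hX𝒴, hXfin⟩ : ∃ X ∈ 𝒴, ¬(X ∩ {p : ℕ × ℕ | p.2 ≤ f p.1}).Infinite := by
      by_contra hco
      push_neg at hco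
      have hsub : 𝒴 ⊆ {X ∈ 𝒳 | (X ∩ {p : ℕ × ℕ | p.2 ≤ f p.1}).Infinite} :=
        fun X hX => ⟨(h𝒴sub hX).1, hco X hX⟩
      exact h𝒴unc ((h3 _ hAf).mono hsub)
    have hX𝒳₀ : X ∈ 𝒳₀ := h𝒴sub hX𝒴
    have hev := key_dom (h2 X hX𝒳₀.1) (h𝒳₀col X hX𝒳₀) hfmono hXfin
    refine ⟨gfun X, ⟨X, hX𝒴, rfl⟩, ?_⟩
    filter_upwards [hev] with n hn
    exact le_trans (hhf n) (le_of_lt hn)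
  calc dNumber ≤ Cardinal.mk (gfun '' 𝒴) :=
        csInf_le (OrderBot.bddBelow _) ⟨gfun '' 𝒴, rfl, hdom⟩
    _ ≤ Cardinal.mk 𝒴 := Cardinal.mk_image_le
    _ = Cardinal.aleph 1 := h𝒴mk

lemma backward (hd : dNumber = Cardinal.aleph 1) :
    ∃ 𝒳 : Set (Set (ℕ × ℕ)), ¬𝒳.Countable ∧ (∀ X ∈ 𝒳, X.Infinite) ∧
      ∀ A ∈ FinOtimesFin, {X ∈ 𝒳 | (X ∩ A).Infinite}.Countable := by
  classical
  have hmem := csInf_mem domSet_nonempty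
  rw [show sInf {c | ∃ D : Set (ℕ → ℕ), Cardinal.mk D = c ∧
      ∀ f : ℕ → ℕ, ∃ g ∈ D, ∀ᶠ n in Filter.atTop, f n ≤ g n} = dNumber from rfl, hd] at hmem
  obtain ⟨D, hDmk, hDdom⟩ := hmem
  set T := (Cardinal.aleph 1).ord.ToType with hT
  have hmkT : Cardinal.mk T = Cardinal.aleph 1 := by
    rw [hT, Cardinal.mk_toType, Cardinal.card_ord]
  obtain ⟨e⟩ : Nonempty (D ≃ T) := Cardinal.eq.1 (hDmk.trans hmkT.symm)
  set d : T → ℕ → ℕ := fun i => (e.symm i : ℕ → ℕ) with hdDef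
  have hdsurj : ∀ x ∈ D, ∃ i : T, d i = x := fun x hx =>
    ⟨e ⟨x, hx⟩, by rw [hdDef]; simp⟩
  have hIio : ∀ i : T, (Set.Iio i).Countable :=
    fun i => (countable_iff_lt_aleph_one _).2 (Cardinal.mk_Iio_ord_toType i)
  have wf : WellFounded ((· < ·) : T → T → Prop) := wellFounded_lt
  have hcnt : ∀ (i : T) (F : ∀ j, j < i → (ℕ → ℕ)),
      {g | ∃ j, ∃ hj : j < i, g = F j hj}.Countable := by
    intro i F
    have hc : Countable (Set.Iio i) := (hIio i).to_subtype
    have hsub : {g | ∃ j, ∃ hj : j < i, g = F j hj} ⊆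
        Set.range (fun j : Set.Iio i => F j.1 j.2) := by
      rintro g ⟨j, hj, rfl⟩
      exact ⟨⟨j, hj⟩, rfl⟩
    exact (Set.countable_range _).mono hsub
  set F : T → ℕ → ℕ := WellFounded.fix wf
    (fun i F => Classical.choose (dominate_countable (hcnt i F) (d i))) with hFdef
  have hFeq : ∀ i, F i =
      Classical.choose (dominate_countable (hcnt i (fun j _ => F j)) (d i)) := by
    intro i
    rw [hFdef]
    exact WellFounded.fix_eq wf _ i
  have hspec1 : ∀ (i : T) (n : ℕ), d i n ≤ F i n := by
    intro i n
    have h := (Classical.choose_spec (dominate_countable (hcnt i (fun j _ => F j)) (d i))).1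
    rw [hFeq i]
    exact h n
  have hspec2 : ∀ i j : T, j < i → ∀ᶠ n in atTop, F j n < F i n := by
    intro i j hj
    have h := (Classical.choose_spec (dominate_countable (hcnt i (fun j _ => F j)) (d i))).2
    have hmem : F j ∈ {g | ∃ j', ∃ hj' : j' < i, g = (fun (j : T) (_ : j < i) => F j) j' hj'} :=
      ⟨j, hj, rfl⟩
    have h2 := h _ hmem
    rw [hFeq i]
    exact h2
  set G : T → Set (ℕ × ℕ) := fun i => {p : ℕ × ℕ | p.2 = F i p.1} with hGdef
  have hGne : ∀ i j : T, j < i → G j ≠ G i := by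
    intro i j hj hEq
    obtain ⟨n, hn⟩ := (hspec2 i j hj).exists
    have h1 : ((n : ℕ), F j n) ∈ G j := rfl
    rw [hEq] at h1
    exact Nat.ne_of_lt hn h1
  have hGinj : Function.Injective G := by
    intro i j hij
    rcases lt_trichotomy i j with h | h | h
    · exact absurd hij (hGne j i h)
    · exact h
    · exact absurd hij.symm (hGne i j h)
  refine ⟨Set.range G, ?_, ?_, ?_⟩
  · intro hc
    have := (countable_iff_lt_aleph_one _).1 hc
    rw [Cardinal.mk_range_eq G hGinj, hmkT] at this
    exact lt_irrefl _ this
  · rintro X ⟨i, rfl⟩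
    exact Set.infinite_of_injective_forall_mem
      (f := fun n : ℕ => ((n : ℕ), F i n))
      (fun a b hab => congrArg Prod.fst hab) (fun n => rfl)
  · intro A hA
    have hBfin : {n : ℕ | {m : ℕ | (n, m) ∈ A}.Infinite}.Finite := hA
    set B := {n : ℕ | {m : ℕ | (n, m) ∈ A}.Infinite} with hB
    set g : ℕ → ℕ := fun n => sInf {b | ∀ m, (n, m) ∈ A → m < b} with hg
    have hgn : ∀ n ∉ B, ∀ m, (n, m) ∈ A → m < g n := by
      intro n hn
      have hfin : {m : ℕ | (n, m) ∈ A}.Finite := Set.not_infinite.1 hn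
      obtain ⟨b, hb⟩ := hfin.bddAbove
      have hne : {b | ∀ m, (n, m) ∈ A → m < b}.Nonempty :=
        ⟨b + 1, fun m hm => Nat.lt_succ_of_le (hb hm)⟩
      exact Nat.sInf_mem hne
    obtain ⟨s, hsD, hev⟩ := hDdom g
    obtain ⟨i₀, hi₀⟩ := hdsurj s hsD
    have hsubset : {X ∈ Set.range G | (X ∩ A).Infinite} ⊆ G '' Set.Iic i₀ := by
      rintro X ⟨⟨i, rfl⟩, hinf⟩
      refine ⟨i, ?_, rfl⟩
      by_contra hle
      rw [Set.mem_Iic, not_le] at hle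
      have hev2 := hspec2 i i₀ hle
      have hev3 : ∀ᶠ n in atTop, g n ≤ d i₀ n := by rw [hi₀]; exact hev
      obtain ⟨N, hN⟩ := eventually_atTop.1 (hev3.and hev2)
      have hfin : (G i ∩ A).Finite := by
        refine Set.Finite.subset (((hBfin.union (Set.finite_Iio N)).image
          (fun n => ((n : ℕ), F i n)))) ?_
        rintro ⟨a, b⟩ ⟨hb, hA2⟩
        have hb' : b = F i a := hb
        subst hb'
        refine ⟨a, ?_, rfl⟩
        by_contra hnot
        rw [Set.mem_union, not_or] at hnot
        obtain ⟨haB, haN⟩ := hnot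
        have haN' : N ≤ a := by
          rw [Set.mem_Iio, not_lt] at haN
          exact haN
        obtain ⟨h1, h2⟩ := hN a haN'
        have h3 := hspec1 i₀ a
        have h4 := hgn a haB _ hA2
        omega
      exact hinf hfin
    exact Set.Countable.mono hsubset
      (((((hIio i₀).insert i₀)).mono (by
        intro x hx
        rcases lt_or_eq_of_le (Set.mem_Iic.1 hx) with h | h
        · exact Set.mem_insert_iff.2 (Or.inr h)
        · exact Set.mem_insert_iff.2 (Or.inl h))).image G)

theorem stmt17 :
    (∃ 𝒳 : Set (Set (ℕ × ℕ)), ¬ 𝒳.Countable ∧ (∀ X ∈ 𝒳, X.Infinite) ∧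
      ∀ A ∈ FinOtimesFin, {X ∈ 𝒳 | (X ∩ A).Infinite}.Countable) ↔
    dNumber = Cardinal.aleph 1 := by
  constructor
  · rintro ⟨𝒳, h1, h2, h3⟩
    exact le_antisymm (forward h1 h2 h3) aleph1_le_dNumber
  · exact backward
end

section
/- If 𝔟 ≥ ω₂ then there are no Nwd-Luzin families (equivalently, no Nwd_tr-Luzin families of subsets of 2^{<ω}). -/
open Set Cardinal

/-- `A ⊆ 2^{<ω}` is nowhere dense in the tree of finite binary strings. -/
def IsNwdTree (A : Set (List Bool)) : Prop :=
  ∀ s : List Bool, ∃ t : List Bool, s <+: t ∧ ∀ u ∈ A, ¬ t <+: u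

/-!
Pick for each `X` in an `ℵ₁`-sized subfamily a branch `x` of `2^ω` all of whose initial segments
have extensions in `X`, and a value `b` taken by `x` infinitely often. One function `f ∈ ω^ω`
bounds both the length of some extension of `x ↾ n` in `X` and the position of the next `b` in `x`
after `n`. Since `ℵ₁ < 𝔟`, a single monotone `G` eventually dominates all these functions. The branches
that meet `b` in every window `(k, G k]` with `k ≥ m` form a nowhere dense set of branches, and
the strings of length at most `G n` extending `x ↾ n` for such a branch `x` form a nowhere dense
subset of the tree that every corresponding `X` meets infinitely often. So countably many nowhere
dense sets, indexed by `(m, b)`, catch all `ℵ₁` members of the subfamily.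
-/

open Filter

variable {α : Type*}

def initialSegment (x : ℕ → α) (n : ℕ) : List α := List.ofFn fun i : Fin n => x i

@[simp]
theorem length_initialSegment (x : ℕ → α) (n : ℕ) : (initialSegment x n).length = n := by
  simp [initialSegment]

theorem initialSegment_succ (x : ℕ → α) (n : ℕ) :
    initialSegment x (n + 1) = initialSegment x n ++ [x n] := by
  rw [initialSegment, List.ofFn_succ', List.concat_eq_append]
  rfl

theorem getElem_of_prefix_initialSegment {x : ℕ → α} {t : List α} {n : ℕ}
    (h : t <+: initialSegment x n) {i : ℕ} (hi : i < t.length) : t[i] = x i := by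
  rw [h.getElem hi]
  simp [initialSegment]

/-- König's lemma for the binary tree. -/
theorem exists_branch_infinite {X : Set (List Bool)} (hX : X.Infinite) :
    ∃ x : ℕ → Bool, ∀ n, {u ∈ X | initialSegment x n <+: u}.Infinite := by
  set P : List Bool → Prop := fun s => {u ∈ X | s <+: u}.Infinite
  have step : ∀ s, ∃ b, P s → P (s ++ [b]) := by
    intro s
    by_contra! h
    apply (h true).1
    refine (((finite_singleton s).union (not_infinite.1 (h false).2)).union
      (not_infinite.1 (h true).2)).subset ?_
    rintro u ⟨huX, r, rfl⟩
    rcases r with _ | ⟨_ | _, r⟩ <;> simp [huX]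
  choose next hnext using step
  let c : ℕ → List Bool := fun n => Nat.rec [] (fun _ s => s ++ [next s]) n
  have hc : ∀ n, initialSegment (fun i => next (c i)) n = c n := by
    intro n
    induction n with
    | zero => rfl
    | succ n ih => rw [initialSegment_succ, ih]
  refine ⟨fun i => next (c i), fun n => ?_⟩
  rw [hc]
  induction n with
  | zero => simpa [P, c] using hX
  | succ n ih => exact hnext _ ih

theorem exists_branch_bound {X : Set (List Bool)} (hX : X.Infinite) :
    ∃ (x : ℕ → Bool) (b : Bool) (f : ℕ → ℕ), ∀ n,
      (∃ u ∈ X, initialSegment x n <+: u ∧ u.length ≤ f n) ∧ ∃ i, n < i ∧ i ≤ f n ∧ x i = b := by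
  obtain ⟨x, hx⟩ := exists_branch_infinite hX
  obtain ⟨b, hb⟩ := Finite.exists_infinite_fiber x
  choose u hu using fun n => (hx n).nonempty
  choose i hi using fun n => (infinite_coe_iff.mp hb).exists_gt n
  exact ⟨x, b, fun n => max (u n).length (i n), fun n =>
    ⟨⟨u n, (hu n).1, (hu n).2, le_max_left _ _⟩, i n, (hi n).2, le_max_right _ _, (hi n).1⟩⟩

theorem exists_monotone_eventually_le_of_mk_lt_bNumber {U : Set (ℕ → ℕ)} (hU : #U < bNumber) :
    ∃ G : ℕ → ℕ, Monotone G ∧ ∀ f ∈ U, ∀ᶠ n in atTop, f n ≤ G n := by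
  obtain ⟨g, hg⟩ : ∃ g : ℕ → ℕ, ∀ f ∈ U, {n | g n < f n}.Finite := by
    by_contra! h
    exact hU.not_ge (csInf_le' ⟨U, rfl, h⟩)
  refine ⟨fun n => (Finset.range (n + 1)).sup g,
    fun a b hab => Finset.sup_mono (Finset.range_subset_range.mpr (by omega)), fun f hf => ?_⟩
  filter_upwards [Nat.cofinite_eq_atTop ▸ (hg f hf).eventually_cofinite_notMem] with n hn
  exact (not_lt.mp hn).trans (Finset.le_sup (Finset.self_mem_range_succ n))

def IsNwdBranches (C : Set (ℕ → Bool)) : Prop :=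
  ∀ s : List Bool, ∃ t : List Bool, s <+: t ∧ ∀ x ∈ C, ∀ n, ¬ t <+: initialSegment x n

def hitsAllWindows (G : ℕ → ℕ) (m : ℕ) (b : Bool) : Set (ℕ → Bool) :=
  {x | ∀ k ≥ m, ∃ i, k < i ∧ i ≤ G k ∧ x i = b}

theorem isNwdBranches_hitsAllWindows (G : ℕ → ℕ) (m : ℕ) (b : Bool) :
    IsNwdBranches (hitsAllWindows G m b) := by
  intro s
  set K := max m s.length
  refine ⟨s ++ List.replicate (G K + 1) !b, List.prefix_append _ _, fun x hx n hpre => ?_⟩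
  obtain ⟨i, hKi, hiG, hxi⟩ := hx K (le_max_left _ _)
  have hsi : s.length ≤ i := (le_max_right _ _).trans hKi.le
  have hi : i < (s ++ List.replicate (G K + 1) !b).length := by simp; omega
  have := getElem_of_prefix_initialSegment hpre hi
  rw [List.getElem_append_right hsi, List.getElem_replicate, hxi] at this
  simp at this

def boundedCone (C : Set (ℕ → Bool)) (G : ℕ → ℕ) : Set (List Bool) :=
  {u | ∃ n, ∃ x ∈ C, u.length ≤ G n ∧ initialSegment x n <+: u}

theorem isNwdTree_boundedCone {C : Set (ℕ → Bool)} (hC : IsNwdBranches C) {G : ℕ → ℕ}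
    (hG : Monotone G) : IsNwdTree (boundedCone C G) := by
  intro s
  obtain ⟨t, hst, ht⟩ := hC s
  refine ⟨t ++ List.replicate (G t.length + 1) false, hst.trans (List.prefix_append _ _), ?_⟩
  rintro u ⟨n, x, hxC, hun, hxu⟩ htu
  have hlen := htu.length_le
  simp only [List.length_append, List.length_replicate] at hlen
  -- `u` is longer than `G t.length`, so it lies above the level `t.length`
  have htn : t.length ≤ n := (hG.reflect_lt (by omega)).le
  exact ht x hxC n (List.prefix_of_prefix_length_le ((List.prefix_append _ _).trans htu) hxu
    (by simpa using htn))

theorem infinite_inter_boundedCone {X : Set (List Bool)} {C : Set (ℕ → Bool)} {x : ℕ → Bool}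
    (hx : x ∈ C) {G : ℕ → ℕ}
    (hX : ∀ᶠ n in atTop, ∃ u ∈ X, initialSegment x n <+: u ∧ u.length ≤ G n) :
    (X ∩ boundedCone C G).Infinite := by
  refine Infinite.of_image List.length (infinite_of_forall_exists_gt fun N => ?_)
  obtain ⟨n, ⟨u, huX, hxu, huG⟩, hn⟩ := (hX.and (eventually_gt_atTop N)).exists
  have hnu : n ≤ u.length := by simpa using hxu.length_le
  exact ⟨u.length, ⟨u, ⟨huX, n, x, hx, huG, hxu⟩, rfl⟩, by omega⟩

theorem exists_isNwdTree_infinite_inter_of_mk_lt_bNumber {ι : Type} (X : ι → Set (List Bool))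
    (hι : #ι < bNumber) (hX : ∀ i, (X i).Infinite) :
    ∃ A : ℕ × Bool → Set (List Bool), (∀ j, IsNwdTree (A j)) ∧ ∀ i, ∃ j, (X i ∩ A j).Infinite := by
  choose x b f hf using fun i => exists_branch_bound (hX i)
  obtain ⟨G, hG, hfG⟩ := exists_monotone_eventually_le_of_mk_lt_bNumber
    (mk_range_le.trans_lt hι : #(range f) < bNumber)
  refine ⟨fun j => boundedCone (hitsAllWindows G j.1 j.2) G,
    fun j => isNwdTree_boundedCone (isNwdBranches_hitsAllWindows G j.1 j.2) hG, fun i => ?_⟩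
  obtain ⟨m, hm⟩ := eventually_atTop.mp (hfG (f i) (mem_range_self i))
  refine ⟨(m, b i), infinite_inter_boundedCone (x := x i) (fun k hk => ?_) ?_⟩
  · obtain ⟨j, hkj, hjf, hxj⟩ := (hf i k).2
    exact ⟨j, hkj, hjf.trans (hm k hk), hxj⟩
  · filter_upwards [eventually_ge_atTop m] with n hn
    obtain ⟨u, huX, hxu, huf⟩ := (hf i n).1
    exact ⟨u, huX, hxu, huf.trans (hm n hn)⟩

theorem stmt18 (h : Cardinal.aleph 2 ≤ bNumber) :
    ¬ ∃ 𝒳 : Set (Set (List Bool)), ¬ 𝒳.Countable ∧ (∀ X ∈ 𝒳, X.Infinite) ∧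
      ∀ A : Set (List Bool), IsNwdTree A → {X ∈ 𝒳 | (X ∩ A).Infinite}.Countable := by
  rintro ⟨𝒳, h𝒳, hinf, hLuzin⟩
  obtain ⟨𝒴, h𝒴𝒳, h𝒴⟩ := le_mk_iff_exists_subset.mp
    (aleph_one_le_iff.mpr (not_le.mp (mt le_aleph0_iff_set_countable.mp h𝒳)))
  obtain ⟨A, hA, hcover⟩ := exists_isNwdTree_infinite_inter_of_mk_lt_bNumber (fun Y : 𝒴 => Y.1)
    (h𝒴 ▸ (aleph_lt_aleph.mpr (by norm_num)).trans_le h) fun Y => hinf Y (h𝒴𝒳 Y.2)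
  have h𝒴count : 𝒴.Countable := by
    refine (countable_iUnion fun j => hLuzin (A j) (hA j)).mono fun Y hY => ?_
    obtain ⟨j, hj⟩ := hcover ⟨Y, hY⟩
    exact mem_iUnion.mpr ⟨j, h𝒴𝒳 hY, hj⟩
  exact aleph0_lt_aleph_one.not_ge (h𝒴 ▸ le_aleph0_iff_set_countable.mpr h𝒴count)
end

section
/- If there is an Nwd-Luzin family of size κ > ω₁, then there is a Luzin set (for the meager ideal on 2^ω) of size κ. -/
open Set Cardinal

/-!
Choose for every `X ∈ 𝒳` a branch `Φ X ∈ 2^ω` along which `X` accumulates (König's lemma),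
together with a modulus `μ X n` bounding the length of some element of `X` that extends `Φ X ↾ n`.
If `C ⊆ 2^ω` is nowhere dense and `g : ℕ → ℕ`, the nodes `u` with `n ≤ |u| ≤ g n` and `u ↾ n` in
the tree of `C` form a nowhere dense subset of `2^{<ω}`, and it is met infinitely by every `X`
with `Φ X ∈ C` and `μ X ≤ g` infinitely often; so there are only countably many such `X`.

Fewer than `|𝒳|` functions `F i` cannot dominate every `g`: otherwise the sets of `x` that take
some value `b` in every window `(n, F i n]`, `n ≥ K`, would cover `2^ω` by fewer than `|𝒳|`
nowhere dense sets, and paired with the `F j` they would split `𝒳` into fewer than `|𝒳|`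
countable pieces. Applied to the moduli of `ℵ₁` many `X` with `Φ X ∈ C`, this yields one `g`
catching all of them, so `{X ∈ 𝒳 | Φ X ∈ C}` is countable. Hence `Φ` has countable fibres and
`Φ '' 𝒳` meets every meagre set in a countable set.
-/

open Filter

def branchPrefix (x : ℕ → Bool) (n : ℕ) : List Bool := (List.range n).map x

@[simp] lemma length_branchPrefix (x : ℕ → Bool) (n : ℕ) : (branchPrefix x n).length = n := by
  simp [branchPrefix]

lemma branchPrefix_succ (x : ℕ → Bool) (n : ℕ) :
    branchPrefix x (n + 1) = branchPrefix x n ++ [x n] := by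
  simp [branchPrefix, List.range_succ]

lemma take_branchPrefix (x : ℕ → Bool) {m n : ℕ} (h : m ≤ n) :
    (branchPrefix x n).take m = branchPrefix x m := by
  simp [branchPrefix, ← List.map_take, List.take_range, min_eq_left h]

lemma branchPrefix_prefix (x : ℕ → Bool) {m n : ℕ} (h : m ≤ n) :
    branchPrefix x m <+: branchPrefix x n :=
  take_branchPrefix x h ▸ List.take_prefix _ _

lemma branchPrefix_length_eq_of_prefix {x : ℕ → Bool} {t : List Bool} {n : ℕ}
    (h : t <+: branchPrefix x n) : branchPrefix x t.length = t := by
  rw [← take_branchPrefix x (by simpa using h.length_le)]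
  exact (List.prefix_iff_eq_take.mp h).symm

lemma branchPrefix_eq_iff_mem_cylinder {x y : ℕ → Bool} {n : ℕ} :
    branchPrefix y n = branchPrefix x n ↔ y ∈ PiNat.cylinder x n := by
  simp [branchPrefix, List.map_inj_left]

def branchTree (C : Set (ℕ → Bool)) : Set (List Bool) :=
  {u | ∃ x ∈ C, ∃ n, branchPrefix x n = u}

lemma exists_branch_forall_prefix {P : List Bool → Prop} (h0 : P [])
    (hstep : ∀ s, P s → ∃ b, P (s ++ [b])) : ∃ x : ℕ → Bool, ∀ n, P (branchPrefix x n) := by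
  choose! next hnext using hstep
  let path : ℕ → List Bool := fun n => Nat.rec [] (fun _ s => s ++ [next s]) n
  have hpath : ∀ n, branchPrefix (fun n => next (path n)) n = path n := by
    intro n
    induction n with
    | zero => rfl
    | succ n ih => rw [branchPrefix_succ, ih]
  refine ⟨fun n => next (path n), fun n => hpath n ▸ ?_⟩
  induction n with
  | zero => exact h0
  | succ n ih => exact hnext _ ih

lemma exists_bit_infinite_extensions {X : Set (List Bool)} {s : List Bool}
    (h : {u ∈ X | s <+: u}.Infinite) : ∃ b, {u ∈ X | s ++ [b] <+: u}.Infinite := by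
  by_contra! hfin
  refine h ((((hfin true).union (hfin false)).insert s).subset ?_)
  rintro u ⟨huX, r, rfl⟩
  rcases r with _ | ⟨b, r⟩
  · simp
  · cases b
    · exact .inr (.inr ⟨huX, r, by simp⟩)
    · exact .inr (.inl ⟨huX, r, by simp⟩)

def AccumulatesAt (X : Set (List Bool)) (x : ℕ → Bool) (f : ℕ → ℕ) : Prop :=
  ∀ n, ∃ u ∈ X, branchPrefix x n <+: u ∧ u.length ≤ f n

lemma exists_accumulatesAt_of_infinite {X : Set (List Bool)} (hX : X.Infinite) :
    ∃ x f, AccumulatesAt X x f := by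
  obtain ⟨x, hx⟩ := exists_branch_forall_prefix (P := fun s => {u ∈ X | s <+: u}.Infinite)
    (by simpa using hX) fun _ => exists_bit_infinite_extensions
  choose u hu using fun n => (hx n).nonempty
  exact ⟨x, fun n => (u n).length, fun n => ⟨u n, (hu n).1, (hu n).2, le_rfl⟩⟩

def catchingSet (C : Set (ℕ → Bool)) (g : ℕ → ℕ) : Set (List Bool) :=
  {u | ∃ n ≤ u.length, u.length ≤ g n ∧ u.take n ∈ branchTree C}

lemma IsNwdTree.catchingSet {C : Set (ℕ → Bool)} (hC : IsNwdTree (branchTree C)) (g : ℕ → ℕ) :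
    IsNwdTree (catchingSet C g) := by
  intro s
  obtain ⟨t, hst, ht⟩ := hC s
  set L := (Finset.range t.length).sup g
  refine ⟨t ++ List.replicate (L + 1) false, hst.trans (List.prefix_append _ _), ?_⟩
  rintro u ⟨n, hnu, hun, hmem⟩ htu
  have hlen : t.length + (L + 1) ≤ u.length := by simpa using htu.length_le
  rcases lt_or_ge n t.length with hn | hn
  · have : g n ≤ L := Finset.le_sup (Finset.mem_range.mpr hn)
    omega
  · exact ht _ hmem (List.prefix_take_iff.mpr ⟨(List.prefix_append _ _).trans htu, hn⟩)

lemma AccumulatesAt.infinite_inter_catchingSet {X : Set (List Bool)} {x : ℕ → Bool}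
    {f g : ℕ → ℕ} {C : Set (ℕ → Bool)} (hX : AccumulatesAt X x f) (hxC : x ∈ C)
    (hfg : ∃ᶠ n in atTop, f n ≤ g n) : (X ∩ catchingSet C g).Infinite := by
  intro hfin
  obtain ⟨L, hL⟩ := (hfin.image List.length).bddAbove
  obtain ⟨n, hfgn, hLn⟩ := (hfg.and_eventually (eventually_gt_atTop L)).exists
  obtain ⟨u, huX, hxu, hun⟩ := hX n
  have hnu : n ≤ u.length := by simpa using hxu.length_le
  have hcatch : u ∈ catchingSet C g :=
    ⟨n, hnu, hun.trans hfgn, x, hxC, n, by simpa using List.prefix_iff_eq_take.mp hxu⟩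
  have := hL ⟨u, ⟨huX, hcatch⟩, rfl⟩
  omega

lemma IsNowhereDense.isNwdTree_branchTree {N : Set (ℕ → Bool)} (hN : IsNowhereDense N) :
    IsNwdTree (branchTree N) := by
  intro s
  set x₀ : ℕ → Bool := fun i => s.getD i false
  have hx₀ : branchPrefix x₀ s.length = s :=
    List.ext_getElem (by simp) fun i _ h => by simp [x₀, branchPrefix, h]
  obtain ⟨x, hxs, hxN⟩ := (interior_eq_empty_iff_dense_compl.mp hN).inter_open_nonempty _
    (PiNat.isOpen_cylinder _ x₀ s.length) ⟨x₀, PiNat.self_mem_cylinder _ _⟩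
  obtain ⟨m, hm⟩ := PiNat.exists_disjoint_cylinder isClosed_closure hxN
  refine ⟨branchPrefix x (max m s.length), ?_, ?_⟩
  · calc s = branchPrefix x s.length :=
          ((branchPrefix_eq_iff_mem_cylinder.mpr hxs).trans hx₀).symm
      _ <+: branchPrefix x (max m s.length) := branchPrefix_prefix x (le_max_right _ _)
  rintro _ ⟨y, hyN, k, rfl⟩ ht
  have hy := branchPrefix_length_eq_of_prefix ht
  rw [length_branchPrefix, branchPrefix_eq_iff_mem_cylinder] at hy
  exact hm.ne_of_mem (subset_closure hyN) (PiNat.cylinder_anti x (le_max_left _ _) hy) rfl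

lemma isNwdTree_branchTree_singleton (y : ℕ → Bool) : IsNwdTree (branchTree {y}) := by
  intro s
  refine ⟨s ++ [!y s.length], List.prefix_append _ _, ?_⟩
  rintro _ ⟨_, rfl, k, rfl⟩ ht
  have := branchPrefix_length_eq_of_prefix ht
  simp [branchPrefix_succ] at this

def windowHits (f : ℕ → ℕ) (b : Bool) (K : ℕ) : Set (ℕ → Bool) :=
  {x | ∀ n ≥ K, ∃ m, n < m ∧ m ≤ f n ∧ x m = b}

lemma isNwdTree_branchTree_windowHits (f : ℕ → ℕ) (b : Bool) (K : ℕ) :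
    IsNwdTree (branchTree (windowHits f b K)) := by
  intro s
  set n₀ := max s.length K
  refine ⟨s ++ List.replicate (f n₀ + 1 - s.length) (!b), List.prefix_append _ _, ?_⟩
  rintro _ ⟨x, hx, k, rfl⟩ ht
  obtain ⟨m, hnm, hmf, hxm⟩ := hx n₀ (le_max_right _ _)
  have := congrArg (·[m]?) (branchPrefix_length_eq_of_prefix ht)
  have hsm : s.length ≤ m := by omega
  have hmt : m < s.length + (f n₀ + 1 - s.length) := by omega
  simp [branchPrefix, List.getElem?_append_right hsm, List.getElem?_range hmt,
    List.getElem?_replicate, hxm] at this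

lemma exists_mem_windowHits {ι : Type*} {F : ι → ℕ → ℕ}
    (hF : ∀ g : ℕ → ℕ, ∃ i, ∀ᶠ n in atTop, g n < F i n) (x : ℕ → Bool) :
    ∃ i b K, x ∈ windowHits (F i) b K := by
  obtain ⟨b, hb⟩ : ∃ b, {m | x m = b}.Infinite := by
    by_cases h : {m | x m = true}.Infinite
    · exact ⟨true, h⟩
    · exact ⟨false, by simpa [compl_ofPred] using (Set.not_infinite.mp h).infinite_compl⟩
  choose g hg using hb.exists_gt
  obtain ⟨i, hi⟩ := hF g
  obtain ⟨K, hK⟩ := eventually_atTop.mp hi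
  exact ⟨i, b, K, fun n hn => ⟨g n, (hg n).2, (hK n hn).le, (hg n).1⟩⟩

universe u

lemma mk_le_mul_aleph0_of_subset_iUnion {α ι : Type u} {s : Set α} {t : ι → Set α}
    (hst : s ⊆ ⋃ i, t i) (ht : ∀ i, (t i).Countable) : #s ≤ #ι * ℵ₀ :=
  calc #s ≤ #(⋃ i, t i) := mk_le_mk_of_subset hst
    _ ≤ #ι * ⨆ i, #(t i) := mk_iUnion_le t
    _ ≤ #ι * ℵ₀ := by gcongr; exact ciSup_le' fun i => (ht i).le_aleph0

lemma mk_image_eq_of_countable_fibers {α β : Type u} {f : α → β} {s : Set α} (hs : ℵ₀ < #s)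
    (hf : ∀ b, {a ∈ s | f a = b}.Countable) : #(f '' s) = #s := by
  refine mk_image_le.antisymm (not_lt.mp fun hlt => ?_)
  have : #s ≤ #(f '' s) * ℵ₀ := mk_le_mul_aleph0_of_subset_iUnion
    (t := fun b : f '' s => {a ∈ s | f a = b})
    (fun a ha => mem_iUnion.2 ⟨⟨f a, mem_image_of_mem f ha⟩, ha, rfl⟩) fun b => hf b
  exact (mul_lt_of_lt hs.le hlt hs).not_ge this

lemma countable_inter_of_isMeagre {Y : Set (ℕ → Bool)}
    (hY : ∀ C, IsNwdTree (branchTree C) → (Y ∩ C).Countable) {M : Set (ℕ → Bool)}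
    (hM : IsMeagre M) : (Y ∩ M).Countable := by
  obtain ⟨S, hS, hSc, hMS⟩ := isMeagre_iff_countable_union_isNowhereDense.mp hM
  refine (hSc.biUnion fun N hN => hY N (hS N hN).isNwdTree_branchTree).mono ?_
  rintro y ⟨hy, hyM⟩
  obtain ⟨N, hN, hyN⟩ := hMS hyM
  exact mem_biUnion hN ⟨hy, hyN⟩

section LuzinFamily

variable {𝒳 : Set (Set (List Bool))} {Φ : Set (List Bool) → ℕ → Bool}
  {μ : Set (List Bool) → ℕ → ℕ}

lemma countable_setOf_caught
    (hLuzin : ∀ A : Set (List Bool), IsNwdTree A → {X ∈ 𝒳 | (X ∩ A).Infinite}.Countable)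
    (hΦ : ∀ X ∈ 𝒳, AccumulatesAt X (Φ X) (μ X)) {C : Set (ℕ → Bool)}
    (hC : IsNwdTree (branchTree C)) (g : ℕ → ℕ) :
    {X ∈ 𝒳 | Φ X ∈ C ∧ ∃ᶠ n in atTop, μ X n ≤ g n}.Countable := by
  refine (hLuzin _ (hC.catchingSet g)).mono ?_
  rintro X ⟨hX, hXC, hfreq⟩
  exact ⟨hX, (hΦ X hX).infinite_inter_catchingSet hXC hfreq⟩

lemma exists_frequently_le_of_mk_lt
    (hLuzin : ∀ A : Set (List Bool), IsNwdTree A → {X ∈ 𝒳 | (X ∩ A).Infinite}.Countable)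
    (hΦ : ∀ X ∈ 𝒳, AccumulatesAt X (Φ X) (μ X)) (h𝒳 : ℵ₀ < #𝒳) {ι : Type} (F : ι → ℕ → ℕ)
    (hι : #ι < #𝒳) : ∃ g : ℕ → ℕ, ∀ i, ∃ᶠ n in atTop, F i n ≤ g n := by
  by_contra! hdom
  have hcover : 𝒳 ⊆ ⋃ p : ι × Bool × ℕ × ι,
      {X ∈ 𝒳 | Φ X ∈ windowHits (F p.1) p.2.1 p.2.2.1 ∧ ∃ᶠ n in atTop, μ X n ≤ F p.2.2.2 n} := by
    intro X hX
    obtain ⟨i, b, K, hXw⟩ := exists_mem_windowHits hdom (Φ X)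
    obtain ⟨j, hj⟩ := hdom (μ X)
    exact mem_iUnion.2 ⟨(i, b, K, j), hX, hXw, (hj.mono fun _ => le_of_lt).frequently⟩
  refine (mk_le_mul_aleph0_of_subset_iUnion hcover fun p => countable_setOf_caught hLuzin hΦ
    (isNwdTree_branchTree_windowHits _ _ _) _).not_gt ?_
  have hℵ₀ := h𝒳.le
  have hcount (α : Type) [Countable α] : #α < #𝒳 := mk_le_aleph0.trans_lt h𝒳
  simp only [mk_prod, lift_id]
  exact mul_lt_of_lt hℵ₀ (mul_lt_of_lt hℵ₀ hι (mul_lt_of_lt hℵ₀ (hcount Bool)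
    (mul_lt_of_lt hℵ₀ (hcount ℕ) hι))) h𝒳

lemma countable_setOf_branch_mem
    (hLuzin : ∀ A : Set (List Bool), IsNwdTree A → {X ∈ 𝒳 | (X ∩ A).Infinite}.Countable)
    (hΦ : ∀ X ∈ 𝒳, AccumulatesAt X (Φ X) (μ X)) (h𝒳 : ℵ₁ < #𝒳) {C : Set (ℕ → Bool)}
    (hC : IsNwdTree (branchTree C)) : {X ∈ 𝒳 | Φ X ∈ C}.Countable := by
  by_contra hunc
  obtain ⟨T, hTC, hT⟩ := le_mk_iff_exists_subset.mp <|
    aleph_one_le_iff.mpr (lt_of_not_ge (mt le_aleph0_iff_set_countable.mp hunc))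
  obtain ⟨g, hg⟩ := exists_frequently_le_of_mk_lt hLuzin hΦ (aleph0_lt_aleph_one.trans h𝒳)
    (fun X : T => μ X) (hT ▸ h𝒳)
  have hTc : T.Countable := by
    refine (countable_setOf_caught hLuzin hΦ hC g).mono fun X hX => ?_
    exact ⟨(hTC hX).1, (hTC hX).2, hg ⟨X, hX⟩⟩
  exact (lt_aleph_one_iff.mpr hTc.le_aleph0).ne hT

end LuzinFamily

theorem stmt19 (κ : Cardinal) (hκ : Cardinal.aleph 1 < κ)
    (𝒳 : Set (Set (List Bool)))
    (hinf : ∀ X ∈ 𝒳, X.Infinite)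
    (hcard : Cardinal.mk 𝒳 = κ)
    (hLuzin : ∀ A : Set (List Bool), IsNwdTree A → {X ∈ 𝒳 | (X ∩ A).Infinite}.Countable) :
    ∃ Y : Set (ℕ → Bool), Cardinal.mk Y = κ ∧
      ∀ M : Set (ℕ → Bool), IsMeagre M → (Y ∩ M).Countable := by
  have h𝒳 : ℵ₁ < #𝒳 := hcard ▸ hκ
  choose! Φ μ hΦ using fun X hX => exists_accumulatesAt_of_infinite (hinf X hX)
  have hsmall : ∀ C, IsNwdTree (branchTree C) → {X ∈ 𝒳 | Φ X ∈ C}.Countable :=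
    fun C => countable_setOf_branch_mem hLuzin hΦ h𝒳
  refine ⟨Φ '' 𝒳, ?_, fun M => countable_inter_of_isMeagre fun C hC => ?_⟩
  · rw [mk_image_eq_of_countable_fibers (aleph0_lt_aleph_one.trans h𝒳)
      fun y => hsmall {y} (isNwdTree_branchTree_singleton y), hcard]
  · refine ((hsmall C hC).image Φ).mono ?_
    rintro _ ⟨⟨X, hX, rfl⟩, hXC⟩
    exact ⟨X, ⟨hX, hXC⟩, rfl⟩
end
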